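/- arXiv:2602.16319 — 8 statements merged into one kernel-verified Lean document; each statement's English description precedes it below -/
import Mathlib

section
/- For all integers n ≥ 1, q ≥ 2 and w with 1 ≤ w ≤ n, the maximum cardinality A_q(n,2,w) of a q-ary constant-weight code of length n, weight w and minimum distance 2 equals C(n,w)·(q−1)^{w−1}: there exists such a code of cardinality C(n,w)·(q−1)^{w−1}, and every such code has cardinality at most C(n,w)·(q−1)^{w−1}. -/
/-- The weight of a word of length `m` over `ℤ_q` (represented as `Fin q`):
the number of nonzero coordinates. -/
def wordWeight {m q : ℕ} (x : Fin m → Fin q) : ℕ :=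
  (Finset.univ.filter (fun i => (x i : ℕ) ≠ 0)).card

/-- `IsCWCode n q d w C` : `C` is a `q`-ary constant-weight code of length `n`,
weight `w` and minimum distance `d`. -/
def IsCWCode (n q d w : ℕ) (C : Finset (Fin n → Fin q)) : Prop :=
  (∀ x ∈ C, wordWeight x = w) ∧
  (∀ x ∈ C, ∀ y ∈ C, x ≠ y → d ≤ hammingDist x y)

/-!
Sort the words of weight `w` by their support `S`; there are `C(n,w)` supports. Fix a position
`i ∈ S`. Two words with support `S` that agree off `i` are at distance at most `1`, so a code of
minimum distance `2` has at most `(q-1)^(w-1)` words of support `S`: forgetting the symbol at `i`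
is injective on it. Conversely, the nonzero symbols `1, …, q-1` form a system of residues modulo
`q-1`, so the words of weight `w` whose symbols sum to `0` modulo `q-1` have minimum distance `2`,
and on each support the symbol at `i` can be chosen to fix the sum whatever the others are.
-/

open Finset Function

section HammingDist

variable {ι : Type*} {β : ι → Type*} [Fintype ι] [∀ i, DecidableEq (β i)]
  {x y : ∀ i, β i} {i : ι}

theorem hammingDist_le_one_of_forall_ne (h : ∀ j ≠ i, x j = y j) : hammingDist x y ≤ 1 :=
  card_le_one.mpr fun j hj k hk => by
    simp only [mem_filter, mem_univ, true_and] at hj hk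
    exact (not_imp_comm.mp (h j) hj).trans (not_imp_comm.mp (h k) hk).symm

theorem forall_ne_eq_of_hammingDist_le_one (h : hammingDist x y ≤ 1) (hi : x i ≠ y i) :
    ∀ j ≠ i, x j = y j := by
  intro j hji
  by_contra hj
  have : 1 < hammingDist x y := one_lt_card.mpr ⟨j, by simpa using hj, i, by simpa using hi, hji⟩
  omega

end HammingDist

theorem Fintype.apply_eq_of_sum_comp_eq {ι α M : Type*} [Fintype ι] [DecidableEq ι]
    [AddCancelCommMonoid M] (g : α → M) {x y : ι → α} {i : ι} (hxy : ∀ j ≠ i, x j = y j)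
    (h : ∑ j, g (x j) = ∑ j, g (y j)) : g (x i) = g (y i) := by
  have hrest : ∑ j ∈ {i}ᶜ, g (x j) = ∑ j ∈ {i}ᶜ, g (y j) :=
    Finset.sum_congr rfl fun j hj => congrArg g (hxy j (by simpa using hj))
  rw [sum_eq_add_sum_compl i, sum_eq_add_sum_compl i (fun j => g (y j)), hrest] at h
  exact add_right_cancel h

namespace ConstantWeightCode

variable {n q : ℕ}

def support (x : Fin n → Fin q) : Finset (Fin n) := {i | (x i : ℕ) ≠ 0}

theorem wordWeight_eq_card_support (x : Fin n → Fin q) : wordWeight x = #(support x) := rfl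

theorem wordWeight_eq_sum (x : Fin n → Fin q) :
    wordWeight x = ∑ i, if (x i : ℕ) ≠ 0 then 1 else 0 :=
  card_filter _ _

theorem support_update {x : Fin n → Fin q} {i : Fin n} {a : Fin q} :
    support (update x i a) = if (a : ℕ) = 0 then (support x).erase i else insert i (support x) := by
  ext j
  by_cases hj : j = i <;> split_ifs <;> simp_all [support]

def symbolSum (x : Fin n → Fin q) : ZMod (q - 1) := ∑ i, ((x i : ℕ) : ZMod (q - 1))

theorem symbolSum_update (x : Fin n → Fin q) (i : Fin n) (a : Fin q) :
    symbolSum (update x i a) = symbolSum x - ((x i : ℕ) : ZMod (q - 1)) + (a : ℕ) := by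
  simp only [symbolSum, Fintype.sum_eq_add_sum_compl i, update_self]
  rw [sum_congr rfl fun j hj => by rw [update_of_ne (by simpa using hj)]]
  ring

def symbolOfResidue (hq : 2 ≤ q) (r : ZMod (q - 1)) : Fin q :=
  haveI : NeZero (q - 1) := ⟨by omega⟩
  ⟨(r - 1).val + 1, by have := (r - 1).val_lt; omega⟩

theorem symbolOfResidue_ne_zero (hq : 2 ≤ q) (r : ZMod (q - 1)) :
    ((symbolOfResidue hq r : Fin q) : ℕ) ≠ 0 :=
  Nat.succ_ne_zero _

theorem natCast_symbolOfResidue (hq : 2 ≤ q) (r : ZMod (q - 1)) :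
    ((symbolOfResidue hq r : ℕ) : ZMod (q - 1)) = r := by
  have : NeZero (q - 1) := ⟨by omega⟩
  simp [symbolOfResidue]

theorem symbolOfResidue_natCast (hq : 2 ≤ q) {a : Fin q} (ha : (a : ℕ) ≠ 0) :
    symbolOfResidue hq ((a : ℕ) : ZMod (q - 1)) = a := by
  have hsub : ((a : ℕ) : ZMod (q - 1)) - 1 = ((a - 1 : ℕ) : ZMod (q - 1)) := by
    rw [Nat.cast_sub (by omega), Nat.cast_one]
  ext
  simp only [symbolOfResidue, hsub, ZMod.val_natCast,
    Nat.mod_eq_of_lt (by omega : (a : ℕ) - 1 < q - 1)]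
  omega

theorem eq_of_forall_ne_of_wordWeight_eq_of_symbolSum_eq (hq : 2 ≤ q) {x y : Fin n → Fin q}
    {i : Fin n} (hxy : ∀ j ≠ i, x j = y j) (hw : wordWeight x = wordWeight y)
    (hs : symbolSum x = symbolSum y) : x = y := by
  rw [wordWeight_eq_sum, wordWeight_eq_sum] at hw
  have hzero :=
    Fintype.apply_eq_of_sum_comp_eq (fun a : Fin q => if (a : ℕ) ≠ 0 then 1 else 0) hxy hw
  have hres :=
    Fintype.apply_eq_of_sum_comp_eq (fun a : Fin q => ((a : ℕ) : ZMod (q - 1))) hxy hs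
  funext j
  by_cases hji : j = i
  · subst hji
    by_cases hx : (x j : ℕ) = 0 <;> by_cases hy : (y j : ℕ) = 0
    · exact Fin.ext (hx.trans hy.symm)
    · simp [hx, hy] at hzero
    · simp [hx, hy] at hzero
    · rw [← symbolOfResidue_natCast hq hx, ← symbolOfResidue_natCast hq hy, hres]
  · exact hxy j hji

def zeroSumCode (n q w : ℕ) : Finset (Fin n → Fin q) := {x | wordWeight x = w ∧ symbolSum x = 0}

theorem isCWCode_zeroSumCode (hq : 2 ≤ q) (w : ℕ) : IsCWCode n q 2 w (zeroSumCode n q w) := by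
  refine ⟨fun x hx => (mem_filter.mp hx).2.1, fun x hx y hy hne => ?_⟩
  simp only [zeroSumCode, mem_filter, mem_univ, true_and] at hx hy
  obtain ⟨i, hi⟩ := Function.ne_iff.mp hne
  by_contra! hlt
  exact hne <| eq_of_forall_ne_of_wordWeight_eq_of_symbolSum_eq hq
    (forall_ne_eq_of_hammingDist_le_one (by omega) hi) (hx.1.trans hy.1.symm)
    (hx.2.trans hy.2.symm)

theorem card_filter_support_eq (hq : q ≠ 0) (T : Finset (Fin n)) :
    #{x : Fin n → Fin q | support x = T} = (q - 1) ^ #T := by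
  have : NeZero q := ⟨hq⟩
  have hpi : ({x : Fin n → Fin q | support x = T} : Finset _) =
      Fintype.piFinset fun j => if j ∈ T then univ.erase 0 else {0} := by
    ext x
    simp only [mem_filter, mem_univ, true_and, Fintype.mem_piFinset, support, Finset.ext_iff]
    refine forall_congr' fun j => ?_
    split_ifs <;> simp_all [Fin.val_eq_zero_iff]
  simp [hpi, apply_ite, prod_ite_mem]

theorem card_eq_sum_card_filter_support {w : ℕ} {C : Finset (Fin n → Fin q)}
    (hC : ∀ x ∈ C, wordWeight x = w) :
    #C = ∑ S ∈ powersetCard w univ, #{x ∈ C | support x = S} :=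
  card_eq_sum_card_fiberwise fun x hx => mem_powersetCard.mpr ⟨subset_univ _, hC x hx⟩

theorem card_filter_support_le_of_two_le_hammingDist (hq : q ≠ 0) {C : Finset (Fin n → Fin q)}
    (hC : ∀ x ∈ C, ∀ y ∈ C, x ≠ y → 2 ≤ hammingDist x y) {S : Finset (Fin n)} {i : Fin n}
    (hi : i ∈ S) : #{x ∈ C | support x = S} ≤ (q - 1) ^ (#S - 1) := by
  rw [← card_erase_of_mem hi, ← card_filter_support_eq hq]
  refine card_le_card_of_injOn (fun x => update x i ⟨0, by omega⟩) (fun x hx => ?_)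
    fun x hx y hy hxy => ?_
  · simp only [mem_coe, mem_filter, mem_univ, true_and] at hx ⊢
    rw [support_update, if_pos rfl, hx.2]
  · simp only [mem_coe, mem_filter] at hx hy
    by_contra hne
    have hclose : hammingDist x y ≤ 1 := hammingDist_le_one_of_forall_ne (i := i) fun j hj => by
      simpa [update_of_ne hj] using congrFun hxy j
    have := hC x hx.1 y hy.1 hne
    omega

theorem coe_eq_zero_of_support_eq_erase {y : Fin n → Fin q} {S : Finset (Fin n)} {i : Fin n}
    (hy : support y = S.erase i) : (y i : ℕ) = 0 := by
  simpa [support] using (hy ▸ notMem_erase i S : i ∉ support y)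

theorem le_card_filter_support_zeroSumCode (hq : 2 ≤ q) {S : Finset (Fin n)} {i : Fin n}
    (hi : i ∈ S) : (q - 1) ^ (#S - 1) ≤ #{x ∈ zeroSumCode n q #S | support x = S} := by
  rw [← card_erase_of_mem hi, ← card_filter_support_eq (by omega : q ≠ 0)]
  refine card_le_card_of_injOn (fun y => update y i (symbolOfResidue hq (-symbolSum y)))
    (fun y hy => ?_) fun y hy y' hy' hyy' => ?_
  · simp only [mem_coe, mem_filter, zeroSumCode, mem_univ, true_and] at hy ⊢
    have hsupp : support (update y i (symbolOfResidue hq (-symbolSum y))) = S := by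
      rw [support_update, if_neg (symbolOfResidue_ne_zero hq _), hy, insert_erase hi]
    refine ⟨⟨by rw [wordWeight_eq_card_support, hsupp], ?_⟩, hsupp⟩
    rw [symbolSum_update, natCast_symbolOfResidue, coe_eq_zero_of_support_eq_erase hy]
    simp
  · simp only [mem_coe, mem_filter, mem_univ, true_and] at hy hy'
    funext j
    by_cases hj : j = i
    · subst hj
      exact Fin.ext ((coe_eq_zero_of_support_eq_erase hy).trans
        (coe_eq_zero_of_support_eq_erase hy').symm)
    · simpa [update_of_ne hj] using congrFun hyy' j

theorem card_le_of_isCWCode (hq : q ≠ 0) {w : ℕ} (hw : 1 ≤ w) {C : Finset (Fin n → Fin q)}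
    (hC : IsCWCode n q 2 w C) : #C ≤ n.choose w * (q - 1) ^ (w - 1) :=
  calc #C = ∑ S ∈ powersetCard w univ, #{x ∈ C | support x = S} :=
        card_eq_sum_card_filter_support hC.1
    _ ≤ ∑ S ∈ powersetCard w (univ : Finset (Fin n)), (q - 1) ^ (w - 1) :=
        sum_le_sum fun S hS => by
          obtain ⟨-, rfl⟩ := mem_powersetCard.mp hS
          obtain ⟨i, hi⟩ := card_pos.mp hw
          exact card_filter_support_le_of_two_le_hammingDist hq hC.2 hi
    _ = n.choose w * (q - 1) ^ (w - 1) := by simp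

theorem le_card_zeroSumCode (hq : 2 ≤ q) {w : ℕ} (hw : 1 ≤ w) :
    n.choose w * (q - 1) ^ (w - 1) ≤ #(zeroSumCode n q w) :=
  calc n.choose w * (q - 1) ^ (w - 1)
        = ∑ S ∈ powersetCard w (univ : Finset (Fin n)), (q - 1) ^ (w - 1) := by simp
    _ ≤ ∑ S ∈ powersetCard w univ, #{x ∈ zeroSumCode n q w | support x = S} :=
        sum_le_sum fun S hS => by
          obtain ⟨-, rfl⟩ := mem_powersetCard.mp hS
          obtain ⟨i, hi⟩ := card_pos.mp hw
          exact le_card_filter_support_zeroSumCode hq hi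
    _ = #(zeroSumCode n q w) :=
        (card_eq_sum_card_filter_support (isCWCode_zeroSumCode hq w).1).symm

end ConstantWeightCode

open ConstantWeightCode in
theorem Aq_n_2_w_general (n q w : ℕ) (hq : 2 ≤ q) (hw1 : 1 ≤ w) :
    (∃ C : Finset (Fin n → Fin q), IsCWCode n q 2 w C ∧
        C.card = n.choose w * (q - 1) ^ (w - 1)) ∧
    (∀ C : Finset (Fin n → Fin q), IsCWCode n q 2 w C →
        C.card ≤ n.choose w * (q - 1) ^ (w - 1)) :=
  have hcode := isCWCode_zeroSumCode (n := n) hq w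
  ⟨⟨zeroSumCode n q w, hcode,
      (card_le_of_isCWCode (by omega) hw1 hcode).antisymm (le_card_zeroSumCode hq hw1)⟩,
    fun _ => card_le_of_isCWCode (by omega) hw1⟩

/-- `A_q(n,2,w) = C(n,w) * (q-1)^(w-1)`. -/
theorem Aq_n_2_w (n q w : ℕ) (hn : 1 ≤ n) (hq : 2 ≤ q) (hw1 : 1 ≤ w) (hwn : w ≤ n) :
    (∃ C : Finset (Fin n → Fin q), IsCWCode n q 2 w C ∧
        C.card = n.choose w * (q - 1) ^ (w - 1)) ∧
    (∀ C : Finset (Fin n → Fin q), IsCWCode n q 2 w C →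
        C.card ≤ n.choose w * (q - 1) ^ (w - 1)) :=
  Aq_n_2_w_general n q w hq hw1
end

section
/- For all integers n ≥ 2 and g ≥ 1, setting q = g+1, the maximum cardinality A_q(n,3,2) of a q-ary constant-weight code of length n, weight 2 and minimum distance 3 equals min(⌊g·n/2⌋, C(n,2)); in particular A_q(n,3,2) = ⌊g·n/2⌋ when n > g and A_q(n,3,2) = C(n,2) when n ≤ g. -/
/-!
A codeword of weight 2 is an edge `{u, v}` of the complete graph on the coordinates together
with a nonzero symbol at each endpoint, and minimum distance 3 says exactly that distinct
codewords have distinct supports and never carry the same symbol at a common endpoint. So the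
supports of a code form a graph on `n` vertices in which the edges at each vertex get pairwise
distinct labels from the `g` nonzero symbols: it has at most `C(n,2)` edges, and at most
`⌊gn/2⌋` since every degree is at most `g`. Conversely, every graph of maximum degree at most
`g` can be labelled this way. For `G = min(g, n-1)` the circulant graph on `ℤ_n` with steps
`1, …, ⌊G/2⌋`, together with the matching `{a, a + ⌊n/2⌋}` (`a < ⌊n/2⌋`) when `G` is odd, has
maximum degree `G` and `⌊Gn/2⌋ = min(⌊gn/2⌋, C(n,2))` edges.
-/

open Finset

section Support

variable {ι β : Type*} [Fintype ι] [Zero β] [DecidableEq β]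

def wordSupport (x : ι → β) : Finset ι := {i | x i ≠ 0}

@[simp]
lemma mem_wordSupport {x : ι → β} {i : ι} : i ∈ wordSupport x ↔ x i ≠ 0 := by
  simp [wordSupport]

variable [DecidableEq ι]

lemma filter_ne_subset_wordSupport_union (x y : ι → β) :
    ({i | x i ≠ y i} : Finset ι) ⊆ wordSupport x ∪ wordSupport y := by
  intro i hi
  simp only [mem_filter, mem_univ, true_and] at hi
  simp only [mem_union, mem_wordSupport]
  by_contra! h
  exact hi (h.1.trans h.2.symm)

lemma hammingDist_le_card_wordSupport {x y : ι → β} (h : wordSupport x = wordSupport y) :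
    hammingDist x y ≤ #(wordSupport x) :=
  (card_le_card (filter_ne_subset_wordSupport_union x y)).trans_eq (by rw [h, union_self])

lemma hammingDist_add_two_le {x y : ι → β} {i : ι} (hxy : x i = y i) (hx : x i ≠ 0) :
    hammingDist x y + 2 ≤ #(wordSupport x) + #(wordSupport y) := by
  have hsub : ({j | x j ≠ y j} : Finset ι) ⊆
      (wordSupport x).erase i ∪ (wordSupport y).erase i := by
    intro j hj
    have hji : j ≠ i := by rintro rfl; simp_all
    simpa [hji] using filter_ne_subset_wordSupport_union x y hj
  have hdist : hammingDist x y ≤ #((wordSupport x).erase i) + #((wordSupport y).erase i) :=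
    (card_le_card hsub).trans (card_union_le _ _)
  have hx' := card_erase_add_one (mem_wordSupport.2 hx)
  have hy' := card_erase_add_one (mem_wordSupport.2 (hxy ▸ hx))
  omega

lemma hammingDist_eq_card_union {x y : ι → β}
    (h : ∀ i ∈ wordSupport x ∩ wordSupport y, x i ≠ y i) :
    hammingDist x y = #(wordSupport x ∪ wordSupport y) := by
  refine congrArg card (subset_antisymm (filter_ne_subset_wordSupport_union x y) ?_)
  intro i hi
  by_cases hi' : i ∈ wordSupport x ∩ wordSupport y
  · simpa using h i hi'
  · simp only [mem_inter, mem_union, mem_wordSupport] at hi hi'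
    simp only [mem_filter, mem_univ, true_and]
    rintro hxy
    rw [hxy] at hi hi'
    tauto

end Support

lemma wordWeight_eq_card_wordSupport {m q : ℕ} [NeZero q] (x : Fin m → Fin q) :
    wordWeight x = #(wordSupport x) := by
  simp only [wordWeight, wordSupport, Fin.val_ne_zero_iff]

namespace IsCWCode

variable {n q d w : ℕ} [NeZero q] {C : Finset (Fin n → Fin q)}

lemma card_wordSupport (hC : IsCWCode n q d w C) {x : Fin n → Fin q} (hx : x ∈ C) :
    #(wordSupport x) = w :=
  (wordWeight_eq_card_wordSupport x).symm.trans (hC.1 x hx)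

lemma injOn_wordSupport (hC : IsCWCode n q d w C) (hwd : w < d) :
    Set.InjOn wordSupport (C : Set (Fin n → Fin q)) := by
  intro x hx y hy hxy
  by_contra hne
  have := (hC.2 x hx y hy hne).trans (hammingDist_le_card_wordSupport hxy)
  rw [hC.card_wordSupport hx] at this
  omega

lemma card_le_choose (hC : IsCWCode n q d w C) (hwd : w < d) : #C ≤ n.choose w := by
  calc #C = #(C.image wordSupport) := (card_image_of_injOn (hC.injOn_wordSupport hwd)).symm
    _ ≤ #(powersetCard w (univ : Finset (Fin n))) := card_le_card fun s hs => by
      obtain ⟨x, hx, rfl⟩ := mem_image.1 hs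
      exact mem_powersetCard.2 ⟨subset_univ _, hC.card_wordSupport hx⟩
    _ = n.choose w := by simp

/-- Two codewords sharing a nonzero symbol at a coordinate are at distance at most `2w - 2`. -/
lemma card_filter_ne_zero_le (hC : IsCWCode n q d w C) (hwd : 2 * w < d + 2) (i : Fin n) :
    #{x ∈ C | x i ≠ 0} ≤ q - 1 := by
  have := card_le_card_of_injOn (s := {x ∈ C | x i ≠ 0}) (t := univ.erase 0)
    (fun x : Fin n → Fin q => x i) (fun x hx => by simp_all) fun x hx y hy hxy => by
      simp only [coe_filter] at hx hy
      by_contra hne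
      have hshared := hammingDist_add_two_le hxy hx.2
      rw [hC.card_wordSupport hx.1, hC.card_wordSupport hy.1] at hshared
      have := hC.2 x hx.1 y hy.1 hne
      omega
  simpa using this

lemma card_mul_le (hC : IsCWCode n q d w C) (hwd : 2 * w < d + 2) :
    #C * w ≤ n * (q - 1) := by
  simpa using card_mul_le_card_mul (fun (x : Fin n → Fin q) i => x i ≠ 0) (s := C) (t := univ)
    (fun x hx => (hC.card_wordSupport hx).ge.trans_eq (by simp [wordSupport, bipartiteAbove]))
    (fun i _ => hC.card_filter_ne_zero_le hwd i)

end IsCWCode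

lemma exists_ne_zero_injOn {α : Type*} {q : ℕ} [NeZero q] (s : Finset α) (hs : #s ≤ q - 1) :
    ∃ ℓ : α → Fin q, (∀ a ∈ s, ℓ a ≠ 0) ∧ Set.InjOn ℓ s := by
  have hle : (s : Set α).encard ≤ ((univ.erase 0 : Finset (Fin q)) : Set (Fin q)).encard := by
    simpa only [Set.encard_coe_eq_coe_finsetCard, card_erase_of_mem (mem_univ _), card_univ,
      Fintype.card_fin, Nat.cast_le] using hs
  obtain ⟨ℓ, hmaps, hinj⟩ := s.finite_toSet.exists_injOn_of_encard_le hle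
  exact ⟨ℓ, fun a ha => by simpa using hmaps ha, hinj⟩

theorem exists_isCWCode_of_edges {n q w : ℕ} [NeZero q] (E : Finset (Finset (Fin n)))
    (hE : ∀ e ∈ E, #e = w) (hdeg : ∀ v, #{e ∈ E | v ∈ e} ≤ q - 1) :
    ∃ C, IsCWCode n q (w + 1) w C ∧ #C = #E := by
  choose ℓ hℓ0 hℓinj using fun v => exists_ne_zero_injOn {e ∈ E | v ∈ e} (hdeg v)
  set word : Finset (Fin n) → Fin n → Fin q := fun e t => if t ∈ e then ℓ t e else 0
  have hsupp : ∀ e ∈ E, wordSupport (word e) = e := fun e he => by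
    ext t
    by_cases ht : t ∈ e
    · simp [word, ht, hℓ0 t e (mem_filter.2 ⟨he, ht⟩)]
    · simp [word, ht]
  have hinj : Set.InjOn word E := fun e he f hf hef => by
    rw [← hsupp e he, ← hsupp f hf, hef]
  refine ⟨E.image word, ⟨?_, ?_⟩, card_image_of_injOn hinj⟩
  · simp only [mem_image]
    rintro _ ⟨e, he, rfl⟩
    rw [wordWeight_eq_card_wordSupport, hsupp e he, hE e he]
  · simp only [mem_image]
    rintro _ ⟨e, he, rfl⟩ _ ⟨f, hf, rfl⟩ hne
    have hef : e ≠ f := fun h => hne (h ▸ rfl)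
    have hdiff : ∀ t ∈ e ∩ f, word e t ≠ word f t := fun t ht => by
      obtain ⟨hte, htf⟩ := mem_inter.1 ht
      simpa [word, hte, htf] using
        hef.imp (hℓinj t (mem_filter.2 ⟨he, hte⟩) (mem_filter.2 ⟨hf, htf⟩))
    rw [hammingDist_eq_card_union (by rwa [hsupp e he, hsupp f hf]), hsupp e he, hsupp f hf,
      ← hE e he]
    have hfe : ¬ f ⊆ e := fun h => hef (eq_of_subset_of_card_le h (by rw [hE e he, hE f hf])).symm
    exact card_lt_card (Finset.ssubset_iff_subset_ne.2
      ⟨subset_union_left, fun h => hfe (h ▸ subset_union_right)⟩)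

section Circulant

variable {Γ : Type*} [AddCommGroup Γ] [DecidableEq Γ]

lemma eq_and_eq_or_eq_neg_of_pair_eq {a b d e : Γ} (hd : d ≠ 0)
    (h : ({a, a + d} : Finset Γ) = {b, b + e}) : (a = b ∧ d = e) ∨ d = -e := by
  have ha : a ∈ ({b, b + e} : Finset Γ) := h ▸ mem_insert_self _ _
  have had : a + d ∈ ({b, b + e} : Finset Γ) := h ▸ mem_insert_of_mem (mem_singleton_self _)
  simp only [mem_insert, mem_singleton] at ha had
  rcases ha with rfl | rfl <;> rcases had with had | had
  · exact absurd (add_eq_left.1 had) hd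
  · exact Or.inl ⟨rfl, add_left_cancel had⟩
  · exact Or.inr (by rw [add_assoc, add_eq_left] at had; exact eq_neg_of_add_eq_zero_right had)
  · exact absurd (add_eq_left.1 had) hd

variable [Fintype Γ] {D : Finset Γ}

def circulantEdges (D : Finset Γ) : Finset (Finset Γ) :=
  (univ ×ˢ D).image fun p => {p.1, p.1 + p.2}

lemma card_eq_two_of_mem_circulantEdges (hD : 0 ∉ D) {e : Finset Γ}
    (he : e ∈ circulantEdges D) : #e = 2 := by
  obtain ⟨⟨a, d⟩, hd, rfl⟩ := mem_image.1 he
  have hd0 : d ≠ 0 := fun h0 => hD (h0 ▸ (mem_product.1 hd).2)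
  exact card_pair (by simpa using hd0)

lemma card_circulantEdges (hD : 0 ∉ D) (hneg : ∀ d ∈ D, -d ∉ D) :
    #(circulantEdges D) = Fintype.card Γ * #D := by
  rw [circulantEdges, card_image_of_injOn, card_product, card_univ]
  rintro ⟨a, d⟩ had ⟨b, e⟩ hbe h
  simp only [coe_product, coe_univ, Set.mem_prod, Set.mem_univ, true_and, mem_coe] at had hbe
  rcases eq_and_eq_or_eq_neg_of_pair_eq (fun h0 => hD (h0 ▸ had)) h with ⟨rfl, rfl⟩ | rfl
  · rfl
  · exact absurd had (hneg e hbe)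

lemma mem_or_neg_mem_of_pair_add_mem_circulantEdges {a μ : Γ} (hμ : μ ≠ 0)
    (h : {a, a + μ} ∈ circulantEdges D) : μ ∈ D ∨ -μ ∈ D := by
  obtain ⟨⟨b, d⟩, hd, hbd⟩ := mem_image.1 h
  rcases eq_and_eq_or_eq_neg_of_pair_eq hμ hbd.symm with ⟨-, rfl⟩ | rfl
  · exact Or.inl (mem_product.1 hd).2
  · exact Or.inr (by simpa using (mem_product.1 hd).2)

lemma card_filter_mem_circulantEdges_le (v : Γ) :
    #{e ∈ circulantEdges D | v ∈ e} ≤ 2 * #D := by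
  have hsub : {e ∈ circulantEdges D | v ∈ e} ⊆
      D.image (fun d => {v, v + d}) ∪ D.image (fun d => {v - d, v}) := by
    intro e he
    obtain ⟨he, hv⟩ := mem_filter.1 he
    obtain ⟨⟨a, d⟩, had, rfl⟩ := mem_image.1 he
    have hd := (mem_product.1 had).2
    simp only [mem_insert, mem_singleton] at hv
    rcases hv with rfl | rfl
    · exact mem_union_left _ (mem_image.2 ⟨d, hd, rfl⟩)
    · exact mem_union_right _ (mem_image.2 ⟨d, hd, by simp⟩)
  calc _ ≤ _ := card_le_card hsub
    _ ≤ #D + #D := (card_union_le _ _).trans (add_le_add card_image_le card_image_le)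
    _ = 2 * #D := (two_mul _).symm

end Circulant

section Construction

variable {n : ℕ}

def shortSteps (n k : ℕ) : Finset (Fin n) := {d | 1 ≤ (d : ℕ) ∧ (d : ℕ) ≤ k}

lemma card_shortSteps {k : ℕ} (hk : k < n) : #(shortSteps n k) = k := by
  have : (shortSteps n k).map Fin.valEmbedding = Icc 1 k := by
    ext m
    simp only [shortSteps, mem_map, mem_filter, mem_univ, true_and, Fin.valEmbedding_apply,
      mem_Icc]
    exact ⟨by rintro ⟨d, hd, rfl⟩; exact hd, fun hm => ⟨⟨m, by omega⟩, hm, rfl⟩⟩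
  rw [← card_map, this, Nat.card_Icc, Nat.add_sub_cancel]

variable [NeZero n]

lemma zero_notMem_shortSteps (k : ℕ) : (0 : Fin n) ∉ shortSteps n k := by
  simp [shortSteps]

lemma neg_notMem_shortSteps {k : ℕ} (hk : 2 * k < n) {d : Fin n} (hd : d ∈ shortSteps n k) :
    -d ∉ shortSteps n k := by
  simp only [shortSteps, mem_filter, mem_univ, true_and] at hd ⊢
  rw [Fin.val_neg, if_neg (fun h => by simp [h] at hd)]
  omega

lemma card_circulantEdges_shortSteps {k : ℕ} (hk : 2 * k < n) :
    #(circulantEdges (shortSteps n k)) = n * k := by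
  rw [card_circulantEdges (zero_notMem_shortSteps k) fun d => neg_notMem_shortSteps hk,
    Fintype.card_fin, card_shortSteps (by omega)]

lemma card_filter_mem_circulantEdges_shortSteps_le {k : ℕ} (hk : k < n) (v : Fin n) :
    #{e ∈ circulantEdges (shortSteps n k) | v ∈ e} ≤ 2 * k :=
  (card_filter_mem_circulantEdges_le v).trans_eq (by rw [card_shortSteps hk])

def halfTurn (n : ℕ) [NeZero n] : Fin n :=
  ⟨n / 2, Nat.div_lt_self (Nat.pos_of_neZero n) one_lt_two⟩

lemma val_halfTurn : (halfTurn n : ℕ) = n / 2 := rfl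

lemma val_add_halfTurn {a : Fin n} (ha : (a : ℕ) < n / 2) :
    ((a + halfTurn n : Fin n) : ℕ) = a + n / 2 := by
  rw [Fin.val_add, val_halfTurn, Nat.mod_eq_of_lt (by omega)]

def antipodalMatching (n : ℕ) [NeZero n] : Finset (Finset (Fin n)) :=
  ({a | (a : ℕ) < n / 2} : Finset (Fin n)).image fun a => {a, a + halfTurn n}

lemma card_eq_two_of_mem_antipodalMatching {e : Finset (Fin n)} (he : e ∈ antipodalMatching n) :
    #e = 2 := by
  obtain ⟨a, ha, rfl⟩ := mem_image.1 he
  have ha := (mem_filter.1 ha).2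
  exact card_pair fun h => by have := congrArg Fin.val h; rw [val_add_halfTurn ha] at this; omega

lemma card_antipodalMatching : #(antipodalMatching n) = n / 2 := by
  rw [antipodalMatching, card_image_of_injOn, Fin.card_filter_val_lt,
    min_eq_right (Nat.div_le_self _ _)]
  intro a ha b hb (h : ({a, a + halfTurn n} : Finset (Fin n)) = {b, b + halfTurn n})
  have ha : (a : ℕ) < n / 2 := by simpa using ha
  have hb : (b : ℕ) < n / 2 := by simpa using hb
  have : a ∈ ({b, b + halfTurn n} : Finset (Fin n)) := h ▸ mem_insert_self _ _
  simp only [mem_insert, mem_singleton] at this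
  rcases this with h | h
  · exact h
  · have := congrArg Fin.val h; rw [val_add_halfTurn hb] at this; omega

lemma card_filter_mem_antipodalMatching_le_one (v : Fin n) :
    #{e ∈ antipodalMatching n | v ∈ e} ≤ 1 := by
  refine card_le_one.2 fun e he f hf => ?_
  obtain ⟨he, hve⟩ := mem_filter.1 he
  obtain ⟨hf, hvf⟩ := mem_filter.1 hf
  obtain ⟨a, ha, rfl⟩ := mem_image.1 he
  obtain ⟨b, hb, rfl⟩ := mem_image.1 hf
  have ha := (mem_filter.1 ha).2
  have hb := (mem_filter.1 hb).2
  simp only [mem_insert, mem_singleton, Fin.ext_iff, val_add_halfTurn ha,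
    val_add_halfTurn hb] at hve hvf
  have : a = b := Fin.ext (by omega)
  rw [this]

lemma disjoint_circulantEdges_antipodalMatching {k : ℕ} (hk : 2 * k + 2 ≤ n) :
    Disjoint (circulantEdges (shortSteps n k)) (antipodalMatching n) := by
  refine disjoint_right.2 fun e he hec => ?_
  obtain ⟨a, ha, rfl⟩ := mem_image.1 he
  have ha := (mem_filter.1 ha).2
  have hhalf : halfTurn n ≠ 0 := fun h => by
    have := congrArg Fin.val h; rw [val_halfTurn] at this; simp at this; omega
  rcases mem_or_neg_mem_of_pair_add_mem_circulantEdges hhalf hec with h | h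
  · simp only [shortSteps, mem_filter, mem_univ, true_and, val_halfTurn] at h; omega
  · simp only [shortSteps, mem_filter, mem_univ, true_and, Fin.val_neg, if_neg hhalf,
      val_halfTurn] at h
    omega

theorem exists_edges_degree_le_card_eq (n G : ℕ) (hG : G ≤ n - 1) :
    ∃ E : Finset (Finset (Fin n)), (∀ e ∈ E, #e = 2) ∧ (∀ v, #{e ∈ E | v ∈ e} ≤ G) ∧
      #E = G * n / 2 := by
  rcases Nat.eq_zero_or_pos n with rfl | hn
  · exact ⟨∅, by simp, by simp, by simp⟩
  have : NeZero n := ⟨hn.ne'⟩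
  obtain ⟨k, rfl | rfl⟩ := Nat.even_or_odd' G
  · refine ⟨circulantEdges (shortSteps n k), fun e he => card_eq_two_of_mem_circulantEdges
      (zero_notMem_shortSteps k) he, card_filter_mem_circulantEdges_shortSteps_le (by omega), ?_⟩
    rw [card_circulantEdges_shortSteps (by omega), mul_assoc, Nat.mul_div_cancel_left _ two_pos,
      mul_comm]
  · have hk : 2 * k + 2 ≤ n := by omega
    refine ⟨circulantEdges (shortSteps n k) ∪ antipodalMatching n, fun e he => ?_, fun v => ?_, ?_⟩
    · rcases mem_union.1 he with he | he
      · exact card_eq_two_of_mem_circulantEdges (zero_notMem_shortSteps k) he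
      · exact card_eq_two_of_mem_antipodalMatching he
    · rw [filter_union]
      exact (card_union_le _ _).trans (add_le_add
        (card_filter_mem_circulantEdges_shortSteps_le (by omega) v)
        (card_filter_mem_antipodalMatching_le_one v))
    · rw [card_union_of_disjoint (disjoint_circulantEdges_antipodalMatching hk),
        card_circulantEdges_shortSteps (by omega), card_antipodalMatching,
        show (2 * k + 1) * n = n + 2 * (n * k) by ring, Nat.add_mul_div_left _ _ two_pos, add_comm]

lemma min_div_two_choose_two (n g : ℕ) :
    min (g * n / 2) (n.choose 2) = min g (n - 1) * n / 2 := by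
  have hmono : Monotone (· / 2 : ℕ → ℕ) := fun _ _ h => Nat.div_le_div_right h
  rw [min_mul_of_nonneg _ _ (Nat.zero_le n), hmono.map_min,
    Nat.choose_two_right, mul_comm n]

theorem Aq_n_3_2_general (n g : ℕ) :
    (∃ C : Finset (Fin n → Fin (g + 1)), IsCWCode n (g + 1) 3 2 C ∧
        C.card = min (g * n / 2) (n.choose 2)) ∧
    (∀ C : Finset (Fin n → Fin (g + 1)), IsCWCode n (g + 1) 3 2 C →
        C.card ≤ min (g * n / 2) (n.choose 2)) ∧
    (n > g → min (g * n / 2) (n.choose 2) = g * n / 2) ∧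
    (n ≤ g → min (g * n / 2) (n.choose 2) = n.choose 2) := by
  refine ⟨?_, fun C hC => le_min ?_ (hC.card_le_choose (by norm_num)), fun h => ?_, fun h => ?_⟩
  · obtain ⟨E, hE, hdeg, hcard⟩ :=
      exists_edges_degree_le_card_eq n (min g (n - 1)) (min_le_right _ _)
    obtain ⟨C, hC, hCcard⟩ := exists_isCWCode_of_edges (q := g + 1) E hE
      fun v => (hdeg v).trans (min_le_left _ _)
    exact ⟨C, hC, by rw [hCcard, hcard, min_div_two_choose_two]⟩
  · rw [Nat.le_div_iff_mul_le two_pos, mul_comm g]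
    simpa using hC.card_mul_le (by norm_num)
  · rw [min_div_two_choose_two, min_eq_left (by omega)]
  · rw [min_div_two_choose_two, min_eq_right (by omega), Nat.choose_two_right, mul_comm]

/-- `A_{g+1}(n,3,2) = min(⌊gn/2⌋, C(n,2))`; in particular it equals `⌊gn/2⌋`
when `n > g` and `C(n,2)` when `n ≤ g`. -/
theorem Aq_n_3_2 (n g : ℕ) (hn : 2 ≤ n) (hg : 1 ≤ g) :
    (∃ C : Finset (Fin n → Fin (g + 1)), IsCWCode n (g + 1) 3 2 C ∧
        C.card = min (g * n / 2) (n.choose 2)) ∧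
    (∀ C : Finset (Fin n → Fin (g + 1)), IsCWCode n (g + 1) 3 2 C →
        C.card ≤ min (g * n / 2) (n.choose 2)) ∧
    (n > g → min (g * n / 2) (n.choose 2) = g * n / 2) ∧
    (n ≤ g → min (g * n / 2) (n.choose 2) = n.choose 2) :=
  Aq_n_3_2_general n g
end Construction
end

section
/- For all integers n ≥ 2 and g ≥ 1, there exists a partition of H (the set of all words of length n and weight 2 over ℤ_{g+1}) into g subsets such that each subset has cardinality C(n,2)·g and any two distinct words lying in the same subset have Hamming distance at least 2. (This is an optimal decomposition of the complete multipartite graph K_{n×g} with respect to distance 2.) -/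
/-- The set `H(m)` of all words of length `m` and weight `2` over `ℤ_{g+1}`. -/
def weightTwoWords (m g : ℕ) : Finset (Fin m → Fin (g + 1)) :=
  Finset.univ.filter (fun x => wordWeight x = 2)

/-- A partition of `H(m)` (words of length `m`, weight `2` over `ℤ_{g+1}`) into
`k` subsets, each of cardinality `s`, with pairwise Hamming distance at least
`d` inside each subset. -/
def HasDistPartition (m g k s d : ℕ) : Prop :=
  ∃ P : Fin k → Finset (Fin m → Fin (g + 1)),
    (∀ i j, i ≠ j → Disjoint (P i) (P j)) ∧
    (Finset.univ.biUnion P = weightTwoWords m g) ∧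
    (∀ i, (P i).card = s) ∧
    (∀ i, ∀ x ∈ P i, ∀ y ∈ P i, x ≠ y → d ≤ hammingDist x y)

open Finset

theorem Nat.ModEq.eq_of_pos_of_le {m a b : ℕ} (h : a ≡ b [MOD m]) (ha : 0 < a) (ham : a ≤ m)
    (hb : 0 < b) (hbm : b ≤ m) : a = b :=
  h.eq_of_abs_lt (by rw [abs_lt]; omega)

theorem Nat.exists_add_modEq {m : ℕ} (hm : 0 < m) (a c : ℕ) :
    ∃ b, 0 < b ∧ b ≤ m ∧ a + b ≡ c [MOD m] := by
  obtain ⟨k, rfl⟩ := Nat.exists_eq_add_one_of_ne_zero hm.ne'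
  refine ⟨(c + k * a + k) % (k + 1) + 1, by omega, Nat.mod_lt _ hm, ?_⟩
  calc a + ((c + k * a + k) % (k + 1) + 1)
      ≡ a + ((c + k * a + k) + 1) [MOD k + 1] := ((Nat.mod_modEq _ _).add_right 1).add_left a
    _ = c + (a + 1) * (k + 1) := by ring
    _ ≡ c [MOD k + 1] := Nat.add_mul_mod_self_right _ _ _

theorem Fintype.sum_add_eq_sum_add_of_eq_off {ι M : Type*} [Fintype ι] [DecidableEq ι]
    [AddCommMonoid M] {f g : ι → M} {k : ι} (h : ∀ t ≠ k, f t = g t) :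
    ∑ t, f t + g k = ∑ t, g t + f k := by
  have hrest : ∑ t ∈ univ.erase k, f t = ∑ t ∈ univ.erase k, g t :=
    Finset.sum_congr rfl fun t ht => h t (ne_of_mem_erase ht)
  rw [← add_sum_erase _ f (mem_univ k), ← add_sum_erase _ g (mem_univ k), hrest]
  abel

theorem exists_eq_off_of_hammingDist_eq_one {ι : Type*} [Fintype ι] {β : ι → Type*}
    [∀ i, DecidableEq (β i)] {x y : ∀ i, β i} (h : hammingDist x y = 1) :
    ∃ k, x k ≠ y k ∧ ∀ t ≠ k, x t = y t := by
  obtain ⟨k, hk⟩ := card_eq_one.mp h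
  have hmem : ∀ t, x t ≠ y t ↔ t = k := fun t => by
    rw [← mem_singleton, ← hk, mem_filter, and_iff_right (mem_univ t)]
  exact ⟨k, (hmem k).2 rfl, fun t ht => not_not.mp fun hne => ht ((hmem t).1 hne)⟩

namespace WeightTwoWords

variable {n g : ℕ}

def wordSupport (x : Fin n → Fin (g + 1)) : Finset (Fin n) :=
  univ.filter (fun i => (x i : ℕ) ≠ 0)

def valueSum (x : Fin n → Fin (g + 1)) : ℕ :=
  ∑ t, (x t : ℕ)

def residueClass (c : Fin g) : Finset (Fin n → Fin (g + 1)) :=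
  {x ∈ weightTwoWords n g | valueSum x ≡ c [MOD g]}

theorem mem_wordSupport {x : Fin n → Fin (g + 1)} {t : Fin n} :
    t ∈ wordSupport x ↔ (x t : ℕ) ≠ 0 := by
  simp [wordSupport]

theorem wordWeight_eq_card_wordSupport (x : Fin n → Fin (g + 1)) :
    wordWeight x = #(wordSupport x) := rfl

theorem pos_of_mem_weightTwoWords {x : Fin n → Fin (g + 1)} (hx : x ∈ weightTwoWords n g) :
    0 < g := by
  have hcard : #(wordSupport x) = 2 := (mem_filter.mp hx).2
  obtain ⟨t, ht⟩ := card_pos.mp (by omega : 0 < #(wordSupport x))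
  have hlt := (x t).isLt
  have hne := mem_wordSupport.mp ht
  omega

theorem wordWeight_eq_succ_of_eq_off {x y : Fin n → Fin (g + 1)} {k : Fin n}
    (h : ∀ t ≠ k, x t = y t) (hx : (x k : ℕ) = 0) (hy : (y k : ℕ) ≠ 0) :
    wordWeight y = wordWeight x + 1 := by
  have hsupp : wordSupport y = insert k (wordSupport x) := by
    ext t
    rcases eq_or_ne t k with rfl | htk
    · simp [mem_wordSupport, hy]
    · simp [mem_wordSupport, htk, h t htk]
  rw [wordWeight_eq_card_wordSupport, wordWeight_eq_card_wordSupport, hsupp,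
    card_insert_of_notMem (by simp [mem_wordSupport, hx])]

theorem two_le_hammingDist {c : Fin g} {x y : Fin n → Fin (g + 1)}
    (hx : x ∈ residueClass c) (hy : y ∈ residueClass c) (hxy : x ≠ y) :
    2 ≤ hammingDist x y := by
  by_contra! hlt
  obtain ⟨k, hk, hoff⟩ := exists_eq_off_of_hammingDist_eq_one
    (by have := hammingDist_pos.mpr hxy; omega : hammingDist x y = 1)
  simp only [residueClass, weightTwoWords, mem_filter, mem_univ, true_and] at hx hy
  have hxk : (x k : ℕ) ≠ 0 := fun h0 => by
    have := wordWeight_eq_succ_of_eq_off hoff h0 fun h0' => hk (Fin.ext (h0.trans h0'.symm))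
    omega
  have hyk : (y k : ℕ) ≠ 0 := fun h0 => by
    have := wordWeight_eq_succ_of_eq_off (fun t ht => (hoff t ht).symm) h0
      fun h0' => hk (Fin.ext (h0'.trans h0.symm))
    omega
  have hsum : valueSum x + y k = valueSum y + x k :=
    Fintype.sum_add_eq_sum_add_of_eq_off fun t ht => congrArg Fin.val (hoff t ht)
  have hmod : (x k : ℕ) ≡ y k [MOD g] :=
    Nat.ModEq.add_left_cancel' (valueSum y) <| by
      rw [← hsum]; exact (hx.2.trans hy.2.symm).add_right _
  exact hk (Fin.ext (hmod.eq_of_pos_of_le (by omega) (Fin.is_le _) (by omega) (Fin.is_le _)))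

theorem eq_of_wordSupport_eq {x y : Fin n → Fin (g + 1)} (hS : wordSupport x = wordSupport y)
    (h : ∀ t ∈ wordSupport x, x t = y t) : x = y := by
  funext t
  by_cases ht : t ∈ wordSupport x
  · exact h t ht
  · have hy : t ∉ wordSupport y := hS ▸ ht
    rw [mem_wordSupport, not_not] at ht hy
    exact Fin.ext (ht.trans hy.symm)

theorem valueSum_eq_of_wordSupport_eq_pair {x : Fin n → Fin (g + 1)} {i j : Fin n} (hij : i ≠ j)
    (hx : wordSupport x = {i, j}) : valueSum x = x i + x j := by
  rw [valueSum, ← sum_filter_ne_zero, ← wordSupport, hx, sum_pair hij]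

def pairWord (i j : Fin n) (a b : Fin (g + 1)) : Fin n → Fin (g + 1) :=
  fun t => if t = i then a else if t = j then b else 0

theorem wordSupport_pairWord {i j : Fin n} (hij : i ≠ j) {a b : Fin (g + 1)}
    (ha : (a : ℕ) ≠ 0) (hb : (b : ℕ) ≠ 0) : wordSupport (pairWord i j a b) = {i, j} := by
  ext t
  rw [mem_wordSupport, pairWord, mem_insert, mem_singleton]
  split_ifs <;> simp_all

theorem eq_of_apply_eq_of_wordSupport_eq_pair {c : Fin g} {i j : Fin n} (hij : i ≠ j)
    {x y : Fin n → Fin (g + 1)} (hx : x ∈ residueClass c) (hy : y ∈ residueClass c)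
    (hxS : wordSupport x = {i, j}) (hyS : wordSupport y = {i, j}) (hxy : x i = y i) :
    x = y := by
  have hxc : x i + x j ≡ c [MOD g] :=
    valueSum_eq_of_wordSupport_eq_pair hij hxS ▸ (mem_filter.mp hx).2
  have hyc : y i + y j ≡ c [MOD g] :=
    valueSum_eq_of_wordSupport_eq_pair hij hyS ▸ (mem_filter.mp hy).2
  have hxj : (x j : ℕ) ≠ 0 := mem_wordSupport.mp (by simp [hxS])
  have hyj : (y j : ℕ) ≠ 0 := mem_wordSupport.mp (by simp [hyS])
  have hmod : (x j : ℕ) ≡ y j [MOD g] := Nat.ModEq.add_left_cancel' (x i) <| by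
    rw [show (x i : ℕ) = y i from congrArg Fin.val hxy] at hxc ⊢
    exact hxc.trans hyc.symm
  have hxyj : x j = y j :=
    Fin.ext <| hmod.eq_of_pos_of_le (by omega) (Fin.is_le _) (by omega) (Fin.is_le _)
  refine eq_of_wordSupport_eq (hxS.trans hyS.symm) fun t ht => ?_
  rw [hxS, mem_insert, mem_singleton] at ht
  rcases ht with rfl | rfl
  exacts [hxy, hxyj]

theorem exists_pairWord_mem_residueClass (c : Fin g) {i j : Fin n} (hij : i ≠ j)
    {a : Fin (g + 1)} (ha : a ≠ 0) :
    ∃ b, pairWord i j a b ∈ residueClass c ∧ wordSupport (pairWord i j a b) = {i, j} := by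
  obtain ⟨b, hb0, hbg, hab⟩ := Nat.exists_add_modEq c.pos a c
  have hS : wordSupport (pairWord i j a ⟨b, by omega⟩) = {i, j} :=
    wordSupport_pairWord hij (Fin.val_ne_zero_iff.mpr ha) hb0.ne'
  refine ⟨⟨b, by omega⟩, mem_filter.mpr ⟨mem_filter.mpr ⟨mem_univ _, ?_⟩, ?_⟩, hS⟩
  · rw [wordWeight_eq_card_wordSupport, hS, card_pair hij]
  · rw [valueSum_eq_of_wordSupport_eq_pair hij hS]
    simpa [pairWord, hij.symm] using hab

theorem card_residueClass_filter_wordSupport_eq_pair {i j : Fin n} (hij : i ≠ j) (c : Fin g) :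
    #{x ∈ residueClass c | wordSupport x = {i, j}} = g :=
  calc #{x ∈ residueClass c | wordSupport x = {i, j}}
      = #({a | a ≠ 0} : Finset (Fin (g + 1))) := by
        refine card_nbij (· i) (fun x hx => ?_) (fun x hx y hy hxy => ?_) (fun a ha => ?_)
        · have hxS := (mem_filter.mp hx).2
          exact mem_filter.mpr ⟨mem_univ _, Fin.val_ne_zero_iff.mp
            (mem_wordSupport.mp (by simp [hxS]))⟩
        · obtain ⟨hxc, hxS⟩ := mem_filter.mp hx
          obtain ⟨hyc, hyS⟩ := mem_filter.mp hy
          exact eq_of_apply_eq_of_wordSupport_eq_pair hij hxc hyc hxS hyS hxy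
        · obtain ⟨b, hb, hS⟩ := exists_pairWord_mem_residueClass c hij (mem_filter.mp ha).2
          exact ⟨pairWord i j a b, mem_filter.mpr ⟨hb, hS⟩, by simp [pairWord]⟩
    _ = g := by simp [filter_ne', card_erase_of_mem]

theorem card_residueClass (c : Fin g) :
    #(residueClass c : Finset (Fin n → Fin (g + 1))) = n.choose 2 * g := by
  rw [card_eq_sum_card_fiberwise (s := residueClass c) (t := powersetCard 2 univ)
    fun x hx => mem_powersetCard.mpr ⟨subset_univ _, (mem_filter.mp (mem_filter.mp hx).1).2⟩]
  calc ∑ S ∈ powersetCard 2 univ, #{x ∈ residueClass c | wordSupport x = S}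
      = ∑ S ∈ powersetCard 2 (univ : Finset (Fin n)), g := sum_congr rfl fun S hS => by
        obtain ⟨i, j, hij, rfl⟩ := card_eq_two.mp (mem_powersetCard.mp hS).2
        exact card_residueClass_filter_wordSupport_eq_pair hij c
    _ = n.choose 2 * g := by simp [card_powersetCard]

theorem disjoint_residueClass {c c' : Fin g} (h : c ≠ c') :
    Disjoint (residueClass c : Finset (Fin n → Fin (g + 1))) (residueClass c') := by
  refine disjoint_left.mpr fun x hx hx' => h (Fin.ext ?_)
  exact ((mem_filter.mp hx).2.symm.trans (mem_filter.mp hx').2).eq_of_lt_of_lt c.isLt c'.isLt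

theorem biUnion_residueClass : univ.biUnion residueClass = weightTwoWords n g := by
  ext x
  simp only [mem_biUnion, mem_univ, true_and]
  refine ⟨fun ⟨c, hc⟩ => (mem_filter.mp hc).1, fun hx => ?_⟩
  exact ⟨⟨valueSum x % g, Nat.mod_lt _ (pos_of_mem_weightTwoWords hx)⟩,
    mem_filter.mpr ⟨hx, (Nat.mod_modEq _ _).symm⟩⟩

end WeightTwoWords

open WeightTwoWords in
theorem optimal_decomposition_dist_two_general (n g : ℕ) :
    HasDistPartition n g g (n.choose 2 * g) 2 :=
  ⟨residueClass, fun _ _ => disjoint_residueClass, biUnion_residueClass, card_residueClass,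
    fun _ _ hx _ hy => two_le_hammingDist hx hy⟩

/-- Optimal decomposition of `K_{n×g}` with respect to distance 2: a partition
of `H` into `g` subsets, each of cardinality `C(n,2)·g` and with pairwise
Hamming distance at least 2. -/
theorem optimal_decomposition_dist_two (n g : ℕ) (hn : 2 ≤ n) (hg : 1 ≤ g) :
    HasDistPartition n g g (n.choose 2 * g) 2 :=
  optimal_decomposition_dist_two_general n g
end

section
/- For all integers n ≥ 2 and g ≥ 1, there exists a partition of H (the set of all words of length n and weight 2 over ℤ_{g+1}) into subsets such that each subset has cardinality ⌊n/2⌋ and any two distinct words lying in the same subset have Hamming distance at least 4; the number of subsets in such a partition is g²·(n−1) if n is even and g²·n if n is odd. (This is an optimal decomposition of the complete multipartite graph K_{n×g} with respect to distance 4.) -/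
open Finset

section PairWord

variable {ι α : Type*} [LinearOrder ι] [Zero α]

def pairWord (a b : ι) (s t : α) : ι → α :=
  fun i => if i = a then s else if i = b then t else 0

@[simp]
lemma pairWord_apply_left (a b : ι) (s t : α) : pairWord a b s t a = s := if_pos rfl

lemma pairWord_apply_right {a b : ι} (hab : a ≠ b) (s t : α) : pairWord a b s t b = t := by
  simp [pairWord, hab.symm]

lemma pairWord_ne_zero_iff {a b : ι} (hab : a ≠ b) {s t : α} (hs : s ≠ 0) (ht : t ≠ 0)
    {i : ι} :
    pairWord a b s t i ≠ 0 ↔ i = a ∨ i = b := by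
  unfold pairWord
  by_cases hia : i = a <;> by_cases hib : i = b <;> simp_all

lemma pairWord_inj {a b c d : ι} (hab : a < b) (hcd : c < d) {s t u v : α} (hs : s ≠ 0)
    (ht : t ≠ 0) (hu : u ≠ 0) (hv : v ≠ 0) (h : pairWord a b s t = pairWord c d u v) :
    a = c ∧ b = d ∧ s = u ∧ t = v := by
  have hsupp : ∀ i, i = a ∨ i = b ↔ i = c ∨ i = d := fun i => by
    rw [← pairWord_ne_zero_iff hab.ne hs ht, ← pairWord_ne_zero_iff hcd.ne hu hv, h]
  have hac : a = c := by
    rcases (hsupp a).1 (.inl rfl) with hac | had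
    · exact hac
    rcases (hsupp c).2 (.inl rfl) with hca | hcb
    · exact hca.symm
    · order
  have hbd : b = d := ((hsupp b).1 (.inr rfl)).resolve_left (hac ▸ hab.ne')
  subst hac hbd
  exact ⟨rfl, rfl, by simpa using congrFun h a,
    by simpa [pairWord_apply_right hab.ne] using congrFun h b⟩

lemma four_le_hammingDist_pairWord [Fintype ι] [DecidableEq α] {a b c d : ι} (hab : a ≠ b)
    (hcd : c ≠ d) (hdisj : Disjoint ({a, b} : Finset ι) {c, d}) {s t u v : α} (hs : s ≠ 0)
    (ht : t ≠ 0) (hu : u ≠ 0) (hv : v ≠ 0) :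
    4 ≤ hammingDist (pairWord a b s t) (pairWord c d u v) := by
  have hsub : ({a, b} ∪ {c, d} : Finset ι) ⊆
      ({i | pairWord a b s t i ≠ pairWord c d u v i} : Finset ι) := by
    intro i hi
    have hx := pairWord_ne_zero_iff hab hs ht (i := i)
    have hy := pairWord_ne_zero_iff hcd hu hv (i := i)
    have : i ∈ ({a, b} : Finset ι) → i ∉ ({c, d} : Finset ι) := fun h =>
      disjoint_left.1 hdisj h
    simp only [mem_union, mem_insert, mem_singleton] at hi this
    simp only [mem_filter, mem_univ, true_and]
    intro heq
    rw [heq] at hx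
    tauto
  calc 4 = #({a, b} ∪ {c, d}) := by
        rw [card_union_of_disjoint hdisj, card_pair hab, card_pair hcd]
    _ ≤ hammingDist (pairWord a b s t) (pairWord c d u v) := card_le_card hsub

end PairWord

lemma mem_weightTwoWords {n g : ℕ} {x : Fin n → Fin (g + 1)} :
    x ∈ weightTwoWords n g ↔
      ∃ a b : Fin n, a < b ∧ ∃ s t : Fin g, x = pairWord a b s.succ t.succ := by
  simp only [weightTwoWords, wordWeight, mem_filter, mem_univ, true_and, ne_eq,
    Fin.val_eq_zero_iff]
  constructor
  · intro hx
    obtain ⟨a, b, hab, hS⟩ := card_eq_two.1 hx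
    wlog hlt : a < b generalizing a b
    · exact this b a hab.symm (by rw [hS, pair_comm]) (hab.lt_or_gt.resolve_left hlt)
    have hmem : ∀ i, x i ≠ 0 ↔ i = a ∨ i = b := fun i => by
      simpa using congrArg (i ∈ ·) hS
    obtain ⟨s, hs⟩ := Fin.exists_succ_eq.2 ((hmem a).2 (.inl rfl))
    obtain ⟨t, ht⟩ := Fin.exists_succ_eq.2 ((hmem b).2 (.inr rfl))
    refine ⟨a, b, hlt, s, t, funext fun i => ?_⟩
    unfold pairWord
    split_ifs with hia hib
    · rw [hia, hs]
    · rw [hib, ht]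
    · simpa [hia, hib] using hmem i
  · rintro ⟨a, b, hab, s, t, rfl⟩
    convert card_pair hab.ne
    ext i
    simpa using pairWord_ne_zero_iff hab.ne (Fin.succ_ne_zero s) (Fin.succ_ne_zero t)

section EdgeColoring

variable {α κ : Type*} [LinearOrder α]

structure IsProperEdgeColoring (c : α → α → κ) : Prop where
  symm : ∀ a b, c a b = c b a
  cancel_left : ∀ {a b b'}, b ≠ a → b' ≠ a → c a b = c a b' → b = b'

def colorClass [Fintype α] [DecidableEq κ] (c : α → α → κ) (r : κ) : Finset (α × α) :=
  {p | p.1 < p.2 ∧ c p.1 p.2 = r}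

variable [Fintype α] [DecidableEq κ] {c : α → α → κ}

lemma mem_colorClass {r : κ} {p : α × α} :
    p ∈ colorClass c r ↔ p.1 < p.2 ∧ c p.1 p.2 = r := by
  simp [colorClass]

lemma IsProperEdgeColoring.disjoint_of_mem_colorClass (hc : IsProperEdgeColoring c) {r : κ}
    {p q : α × α} (hp : p ∈ colorClass c r) (hq : q ∈ colorClass c r) (hpq : p ≠ q) :
    Disjoint ({p.1, p.2} : Finset α) {q.1, q.2} := by
  obtain ⟨a, b⟩ := p
  obtain ⟨a', b'⟩ := q
  obtain ⟨hab, rfl⟩ := mem_colorClass.1 hp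
  obtain ⟨hab', hcol⟩ := mem_colorClass.1 hq
  dsimp only at hab hab' hcol
  rw [disjoint_left]
  intro i hi hi'
  simp only [mem_insert, mem_singleton] at hi hi'
  rcases hi with rfl | rfl <;> rcases hi' with h | h <;> subst h
  · exact hpq (by rw [hc.cancel_left hab'.ne' hab.ne' hcol])
  · have := hc.cancel_left hab'.ne hab.ne' ((hc.symm _ _).trans hcol)
    order
  · have := hc.cancel_left hab'.ne' hab.ne (hcol.trans (hc.symm _ _))
    order
  · have := hc.cancel_left hab'.ne hab.ne ((hc.symm _ _).trans (hcol.trans (hc.symm _ _)))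
    exact hpq (by rw [this])

lemma IsProperEdgeColoring.two_mul_card_colorClass_le (hc : IsProperEdgeColoring c) (r : κ) :
    2 * #(colorClass c r) ≤ Fintype.card α :=
  calc 2 * #(colorClass c r) = ∑ p ∈ colorClass c r, #({p.1, p.2} : Finset α) := by
        rw [sum_congr rfl fun p hp => card_pair (mem_colorClass.1 hp).1.ne, sum_const,
          smul_eq_mul, mul_comm]
    _ = #((colorClass c r).biUnion fun p => {p.1, p.2}) :=
        (card_biUnion fun _ hp _ hq hpq => hc.disjoint_of_mem_colorClass hp hq hpq).symm
    _ ≤ Fintype.card α := card_le_univ _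

lemma sum_card_colorClass [Fintype κ] (c : α → α → κ) :
    ∑ r, #(colorClass c r) = (Fintype.card α).choose 2 := by
  rw [← Fintype.card_product_filter_lt, card_eq_sum_card_fiberwise
    (f := fun p : α × α => c p.1 p.2) (t := univ) fun _ _ => mem_univ _]
  simp [colorClass, filter_filter]

lemma IsProperEdgeColoring.card_colorClass [Fintype κ] (hc : IsProperEdgeColoring c)
    (hκ : Fintype.card κ * (Fintype.card α / 2) = (Fintype.card α).choose 2) (r : κ) :
    #(colorClass c r) = Fintype.card α / 2 := by
  have hle : ∀ r ∈ univ, #(colorClass c r) ≤ Fintype.card α / 2 := fun r _ => by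
    have := hc.two_mul_card_colorClass_le r
    omega
  refine (sum_eq_sum_iff_of_le hle).1 ?_ r (mem_univ r)
  rw [sum_card_colorClass, sum_const, card_univ, smul_eq_mul, hκ]

end EdgeColoring

section RotationColoring

def chromaticIndex (n : ℕ) : ℕ := if Even n then n - 1 else n

lemma odd_chromaticIndex {n : ℕ} (hn : 0 < n) : Odd (chromaticIndex n) := by
  unfold chromaticIndex
  split_ifs with h
  · obtain ⟨k, rfl⟩ := h
    exact ⟨k - 1, by omega⟩
  · exact Nat.not_even_iff_odd.1 h

lemma chromaticIndex_mul_half (n : ℕ) : chromaticIndex n * (n / 2) = n.choose 2 := by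
  rw [Nat.choose_two_right]
  rcases Nat.even_or_odd' n with ⟨k, rfl | rfl⟩
  · simp only [chromaticIndex, even_two_mul, if_true]
    rw [Nat.mul_div_cancel_left _ two_pos]
    exact (Nat.div_eq_of_eq_mul_left two_pos (by ring)).symm
  · simp only [chromaticIndex, Nat.not_even_two_mul_add_one, if_false]
    rw [show (2 * k + 1) / 2 = k by omega, Nat.add_sub_cancel]
    exact (Nat.div_eq_of_eq_mul_left two_pos (by ring)).symm

lemma val_le_chromaticIndex {n : ℕ} (v : Fin n) : (v : ℕ) ≤ chromaticIndex n := by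
  unfold chromaticIndex
  split_ifs <;> omega

/-- For odd `n` this is the coloring `a + b` of `ZMod n`. For even `n` the vertex `n - 1` acts
as a point at infinity: it is joined in color `2a` to the vertex `a`, which is the one vertex
left unmatched by the color `2a` among the first `n - 1`. -/
def rotationColoring (n : ℕ) (a b : Fin n) : ZMod (chromaticIndex n) :=
  if (a : ℕ) = chromaticIndex n then 2 * (b : ℕ)
  else if (b : ℕ) = chromaticIndex n then 2 * (a : ℕ)
  else (a : ℕ) + (b : ℕ)

lemma isProperEdgeColoring_rotationColoring {n : ℕ} (hn : 0 < n) :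
    IsProperEdgeColoring (rotationColoring n) where
  symm a b := by
    unfold rotationColoring
    split_ifs with ha hb <;> first | rw [Fin.val_injective (ha.trans hb.symm)] | ring
  cancel_left {a b b'} hb hb' h := by
    set m := chromaticIndex n
    have h2 : IsUnit (2 : ZMod m) := by
      exact_mod_cast (ZMod.isUnit_iff_coprime 2 m).2
        (Nat.coprime_two_left.2 (odd_chromaticIndex hn))
    have hcast : ∀ v w : Fin n, (v : ℕ) ≠ m → (w : ℕ) ≠ m →
        ((v : ℕ) : ZMod m) = (w : ℕ) → v = w := fun v w hv hw hvw => by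
      rw [ZMod.natCast_eq_natCast_iff', Nat.mod_eq_of_lt ((val_le_chromaticIndex v).lt_of_ne hv),
        Nat.mod_eq_of_lt ((val_le_chromaticIndex w).lt_of_ne hw)] at hvw
      exact Fin.ext hvw
    rw [← Fin.val_ne_iff] at hb hb'
    unfold rotationColoring at h
    split_ifs at h with ha hb₁ hb₁' hb₁'
    · exact hcast b b' (ha ▸ hb :) (ha ▸ hb' :) (h2.mul_left_cancel h)
    · exact Fin.ext (hb₁.trans hb₁'.symm)
    · exact absurd (congrArg Fin.val (hcast a b' ha hb₁' (by linear_combination h))) hb'.symm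
    · exact absurd (congrArg Fin.val (hcast a b ha hb₁ (by linear_combination -h))) hb.symm
    · exact hcast b b' hb₁ hb₁' (add_left_cancel h)

end RotationColoring

lemma hasDistPartition_of_fintype {ι : Type*} [Fintype ι] {m g s d : ℕ}
    (P : ι → Finset (Fin m → Fin (g + 1))) (hdisj : ∀ i j, i ≠ j → Disjoint (P i) (P j))
    (hcover : univ.biUnion P = weightTwoWords m g) (hcard : ∀ i, #(P i) = s)
    (hdist : ∀ i, ∀ x ∈ P i, ∀ y ∈ P i, x ≠ y → d ≤ hammingDist x y) :
    HasDistPartition m g (Fintype.card ι) s d := by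
  let e := (Fintype.equivFin ι).symm
  refine ⟨P ∘ e, fun i j hij => hdisj _ _ (e.injective.ne hij), ?_, fun i => hcard _,
    fun i => hdist _⟩
  rw [← hcover]
  ext x
  simp [e.surjective.exists]

def wordClass {n g : ℕ} {κ : Type*} [DecidableEq κ] (c : Fin n → Fin n → κ) (s t : Fin g)
    (r : κ) : Finset (Fin n → Fin (g + 1)) :=
  (colorClass c r).image fun p => pairWord p.1 p.2 s.succ t.succ

lemma hasDistPartition_of_isProperEdgeColoring {n g s : ℕ} {κ : Type*} [Fintype κ]
    [DecidableEq κ] {c : Fin n → Fin n → κ} (hc : IsProperEdgeColoring c)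
    (hs : ∀ r, #(colorClass c r) = s) : HasDistPartition n g (g ^ 2 * Fintype.card κ) s 4 := by
  have hinj {p q : Fin n × Fin n} {r r' : κ} {s t u v : Fin g} (hp : p ∈ colorClass c r)
      (hq : q ∈ colorClass c r')
      (h : pairWord p.1 p.2 s.succ t.succ = pairWord q.1 q.2 u.succ v.succ) :
      p = q ∧ s = u ∧ t = v := by
    obtain ⟨h1, h2, h3, h4⟩ := pairWord_inj (mem_colorClass.1 hp).1 (mem_colorClass.1 hq).1
      (Fin.succ_ne_zero _) (Fin.succ_ne_zero _) (Fin.succ_ne_zero _) (Fin.succ_ne_zero _) h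
    exact ⟨Prod.ext h1 h2, Fin.succ_injective _ h3, Fin.succ_injective _ h4⟩
  have hcard : Fintype.card (Fin g × Fin g × κ) = g ^ 2 * Fintype.card κ := by
    simp [sq, mul_assoc]
  rw [← hcard]
  refine hasDistPartition_of_fintype (fun i => wordClass c i.1 i.2.1 i.2.2) ?_ ?_ ?_ ?_
  · rintro ⟨s, t, r⟩ ⟨u, v, r'⟩ hne
    refine disjoint_left.2 fun x hx hx' => hne ?_
    obtain ⟨p, hp, rfl⟩ := mem_image.1 hx
    obtain ⟨q, hq, hqp⟩ := mem_image.1 hx'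
    obtain ⟨rfl, rfl, rfl⟩ := hinj hq hp hqp
    dsimp only at hp hq ⊢
    rw [← (mem_colorClass.1 hp).2, ← (mem_colorClass.1 hq).2]
  · ext x
    simp only [wordClass, mem_biUnion, mem_image, mem_colorClass, mem_univ, true_and,
      Prod.exists, mem_weightTwoWords]
    constructor
    · rintro ⟨s, t, -, a, b, ⟨hab, -⟩, rfl⟩
      exact ⟨a, b, hab, s, t, rfl⟩
    · rintro ⟨a, b, hab, s, t, rfl⟩
      exact ⟨s, t, c a b, a, b, ⟨hab, rfl⟩, rfl⟩
  · rintro ⟨s, t, r⟩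
    rw [← hs r]
    exact card_image_of_injOn fun p hp q hq h => (hinj hp hq h).1
  · rintro ⟨s, t, r⟩ x hx y hy hxy
    obtain ⟨p, hp, rfl⟩ := mem_image.1 hx
    obtain ⟨q, hq, rfl⟩ := mem_image.1 hy
    exact four_le_hammingDist_pairWord (mem_colorClass.1 hp).1.ne (mem_colorClass.1 hq).1.ne
      (hc.disjoint_of_mem_colorClass hp hq (by rintro rfl; exact hxy rfl))
      (Fin.succ_ne_zero _) (Fin.succ_ne_zero _) (Fin.succ_ne_zero _) (Fin.succ_ne_zero _)

theorem optimal_decomposition_dist_four_general (n g : ℕ) (hn : 2 ≤ n) :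
    HasDistPartition n g (if Even n then g ^ 2 * (n - 1) else g ^ 2 * n) (n / 2) 4 := by
  have hn' : 0 < n := by omega
  have : NeZero (chromaticIndex n) := ⟨(odd_chromaticIndex hn').pos.ne'⟩
  have hc := isProperEdgeColoring_rotationColoring hn'
  have hcard (r : ZMod (chromaticIndex n)) : #(colorClass (rotationColoring n) r) = n / 2 := by
    simpa using hc.card_colorClass (by simpa using chromaticIndex_mul_half n) r
  have h := hasDistPartition_of_isProperEdgeColoring (g := g) hc hcard
  rwa [ZMod.card, chromaticIndex, mul_ite] at h

/-- Optimal decomposition of `K_{n×g}` with respect to distance 4: a partition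
of `H` into subsets of cardinality `⌊n/2⌋` with pairwise Hamming distance at
least 4; the number of subsets is `g²(n-1)` if `n` is even and `g²·n` if `n`
is odd. -/
theorem optimal_decomposition_dist_four (n g : ℕ) (hn : 2 ≤ n) (hg : 1 ≤ g) :
    HasDistPartition n g (if Even n then g ^ 2 * (n - 1) else g ^ 2 * n) (n / 2) 4 :=
  optimal_decomposition_dist_four_general n g hn
end

section
/- Let g ≥ 2 and n > g be integers with g·n odd. Then there is no partition of H (the set of all words of length n and weight 2 over ℤ_{g+1}) into subsets such that each subset has cardinality (g·n−1)/2 and any two distinct words lying in the same subset have Hamming distance at least 3. In other words, when n > g and g·n is odd, the complete multipartite graph K_{n×g} admits no optimal decomposition with respect to distance 3. -/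
/-!
Only counting is needed. Parts of equal size `s = (g n - 1) / 2` partition `H`, so `s` divides
`|H| = C(n, 2) g²`, i.e. `g n - 1` divides `n (n - 1) g²`. But modulo `g n - 1` we have
`g n ≡ 1`, hence `n (n - 1) g² = g n (g n - g) ≡ 1 - g`, and `0 < g - 1 < g n - 1` since `g ≥ 2`
and `n ≥ 2`.
-/

open Finset

section WordCount

variable {ι α : Type*} [Fintype ι] [DecidableEq ι] [Fintype α] [DecidableEq α] [Zero α]

theorem card_filter_support_eq (s : Finset ι) :
    #{x : ι → α | ({i | x i ≠ 0} : Finset ι) = s} = (Fintype.card α - 1) ^ #s := by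
  have hpi : ({x : ι → α | ({i | x i ≠ 0} : Finset ι) = s} : Finset (ι → α)) =
      Fintype.piFinset fun i => if i ∈ s then univ.erase 0 else {0} := by
    ext x
    simp only [mem_filter, mem_univ, true_and, Fintype.mem_piFinset, Finset.ext_iff]
    refine forall_congr' fun i => ?_
    split_ifs with hi <;> simp [hi]
  rw [hpi, Fintype.card_piFinset]
  simp only [apply_ite Finset.card, card_singleton]
  rw [prod_ite_mem, univ_inter, prod_const, card_erase_of_mem (mem_univ _), card_univ]

theorem card_filter_hammingNorm_eq (k : ℕ) :
    #{x : ι → α | hammingNorm x = k} = (Fintype.card ι).choose k * (Fintype.card α - 1) ^ k := by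
  rw [card_eq_sum_card_fiberwise (f := fun x => ({i | x i ≠ 0} : Finset ι))
    (t := powersetCard k univ) fun x hx => by simpa [mem_powersetCard, hammingNorm] using hx]
  have hfibre : ∀ s ∈ powersetCard k (univ : Finset ι),
      #{x ∈ ({x : ι → α | hammingNorm x = k} : Finset _) | ({i | x i ≠ 0} : Finset ι) = s}
        = (Fintype.card α - 1) ^ k := by
    intro s hs
    rw [mem_powersetCard] at hs
    rw [filter_filter, ← hs.2, ← card_filter_support_eq s]
    congr 1
    refine filter_congr fun x _ => ⟨And.right, fun h => ⟨?_, h⟩⟩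
    rw [hammingNorm, h, hs.2]
  rw [sum_congr rfl hfibre, sum_const, card_powersetCard, card_univ, smul_eq_mul]

end WordCount

theorem wordWeight_eq_hammingNorm {m g : ℕ} (x : Fin m → Fin (g + 1)) :
    wordWeight x = hammingNorm x := by
  simp only [wordWeight, hammingNorm, Fin.val_ne_zero_iff]

theorem card_weightTwoWords (m g : ℕ) : #(weightTwoWords m g) = m.choose 2 * g ^ 2 := by
  simpa [weightTwoWords, wordWeight_eq_hammingNorm] using
    card_filter_hammingNorm_eq (ι := Fin m) (α := Fin (g + 1)) 2

theorem HasDistPartition.card_weightTwoWords_eq {m g k s d : ℕ}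
    (h : HasDistPartition m g k s d) : #(weightTwoWords m g) = k * s := by
  obtain ⟨P, hdisj, hunion, hcard, -⟩ := h
  rw [← hunion, card_biUnion fun i _ j _ hij => hdisj i j hij]
  simp [hcard]

theorem not_mul_sub_one_dvd {g n : ℕ} (hg : 2 ≤ g) (hn : 2 ≤ n) :
    ¬ g * n - 1 ∣ n * (n - 1) * g ^ 2 := by
  intro h
  have hZ : ((g : ℤ) * n - 1) ∣ n * (n - 1) * g ^ 2 := by
    have := Int.natCast_dvd_natCast.mpr h
    push_cast [Nat.cast_sub (by nlinarith : 1 ≤ g * n), Nat.cast_sub (by omega : 1 ≤ n)] at this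
    exact this
  have hdvd : ((g : ℤ) * n - 1) ∣ (g : ℤ) - 1 := by
    have hmod : (g : ℤ) - 1 = (g * n - 1) * (g * n - g + 1) - n * (n - 1) * g ^ 2 := by ring
    rw [hmod]
    exact dvd_sub (dvd_mul_right _ _) hZ
  have := Int.le_of_dvd (by omega) hdvd
  nlinarith

/-- If `n > g` and `g·n` is odd, then `K_{n×g}` admits no optimal decomposition
with respect to distance 3: there is no partition of `H` into subsets each of
cardinality `(g·n - 1)/2` and pairwise Hamming distance at least 3. -/
theorem no_optimal_decomposition_dist_three_odd (n g : ℕ) (hg : 2 ≤ g) (hng : g < n)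
    (hodd : Odd (g * n)) :
    ¬ ∃ k : ℕ, HasDistPartition n g k ((g * n - 1) / 2) 3 := by
  rintro ⟨k, hP⟩
  have hs : 2 * ((g * n - 1) / 2) = g * n - 1 := by
    have := Nat.odd_iff.mp hodd
    omega
  have hpairs : 2 * n.choose 2 = n * (n - 1) := by
    have := Nat.even_iff.mp (Nat.even_mul_pred_self n)
    rw [Nat.choose_two_right]
    omega
  refine not_mul_sub_one_dvd hg (show 2 ≤ n by omega) ⟨k, ?_⟩
  calc n * (n - 1) * g ^ 2 = 2 * (n.choose 2 * g ^ 2) := by rw [← hpairs, mul_assoc]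
    _ = 2 * ((g * n - 1) / 2) * k := by
      rw [← card_weightTwoWords, hP.card_weightTwoWords_eq]
      ring
    _ = (g * n - 1) * k := by rw [hs]
end

section
/- For every odd integer n ≥ 3 and every integer g with n ≤ g, there exists an ODAR(n,g), i.e., a partition of the set of all words of length n and weight 2 over ℤ_{g+1} into g² subsets such that each subset has cardinality C(n,2) and any two distinct words lying in the same subset have Hamming distance at least 3. -/
/-- A partition of `H(m)` (words of length `m`, weight `2` over `ℤ_{g+1}`) into
`k` subsets, each of cardinality `s`, with pairwise Hamming distance at least
`3` inside each subset. -/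
def HasDist3Partition (m g k s : ℕ) : Prop :=
  ∃ P : Fin k → Finset (Fin m → Fin (g + 1)),
    (∀ i j, i ≠ j → Disjoint (P i) (P j)) ∧
    (Finset.univ.biUnion P = weightTwoWords m g) ∧
    (∀ i, (P i).card = s) ∧
    (∀ i, ∀ x ∈ P i, ∀ y ∈ P i, x ≠ y → 3 ≤ hammingDist x y)

/-- An `ODAR(m,g)`: a partition of `H(m)` into `g²` subsets, each of
cardinality `C(m,2)` and with pairwise Hamming distance at least 3. -/
def IsODAR (m g : ℕ) : Prop :=
  HasDist3Partition m g (g ^ 2) (m.choose 2)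

/-- An `OF(m,g)`: a partition of `H(m)` into `g(m-1)` subsets, each of
cardinality `g·m/2` and with pairwise Hamming distance at least 3. -/
def IsOF (m g : ℕ) : Prop :=
  HasDist3Partition m g (g * (m - 1)) (g * m / 2)

/-!
Write `n = 2k + 1` and encode the nonzero symbols of `ℤ_{g+1}` by `ZMod g`. The `g²` classes are
indexed by `(κ, d) ∈ ZMod g × ZMod g`. Given two rows `A B : ZMod g → ℕ → ZMod g` with
`A d r - B d r = ±d`, the word of class `(κ, d)` on a pair `{e, f}` of positions has colour
`r = e + f mod n`: the end from which the other one lies at most `k` steps ahead (cyclically) gets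
`κ + A d r`, the other end `κ + B d r`. For a fixed pair, `(κ, d)` ↦ (the two values) is an affine
bijection of `ZMod g × ZMod g`, so every class meets every support exactly once. Two words of one
class with a common position `e` have different colours, and the collision conditions on the rows
say precisely that their values at `e` then differ; all other positions of the two supports
differ trivially, so the distance is at least `3`.

For `d = 0` the rows are `A = B = id`. For `d ≠ 0` of additive order `m`, the positions `≤ k` walk
backwards and the positions `> k` walk forwards along the cosets `J + ℤd`, `J < g / m`, starting at
`J`, with `B` always one step further than `A`. Coset `J` gets `⌈(J+1)m/2⌉ - ⌈Jm/2⌉` backward and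
the remaining forward steps, so the two walks on a coset meet only at `J` and at their far ends,
and these sit `k` or `k + 1` positions apart.
-/

open scoped Finset

lemma Nat.mod_eq_self_or_sub {n z : ℕ} (hz : z < 2 * n) :
    z < n ∧ z % n = z ∨ n ≤ z ∧ z % n = z - n := by
  rcases Nat.lt_or_ge z n with h | h
  · exact .inl ⟨h, Nat.mod_eq_of_lt h⟩
  · exact .inr ⟨h, by rw [Nat.mod_eq_sub_mod h, Nat.mod_eq_of_lt (by omega)]⟩

lemma Int.eq_zero_or_eq_or_eq_neg_of_dvd {m z : ℤ} (hm : 0 < m) (h : m ∣ z)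
    (h1 : -(2 * m) < z) (h2 : z < 2 * m) : z = 0 ∨ z = m ∨ z = -m := by
  obtain ⟨c, rfl⟩ := h
  have : -2 < c := lt_of_mul_lt_mul_left (by linarith) hm.le
  have : c < 2 := lt_of_mul_lt_mul_left (by linarith) hm.le
  interval_cases c <;> simp

lemma ZMod.natCast_injOn_Iio (n : ℕ) : Set.InjOn (Nat.cast : ℕ → ZMod n) (Set.Iio n) :=
  fun x hx x' hx' h => by
    simpa [ZMod.val_natCast_of_lt hx, ZMod.val_natCast_of_lt hx'] using congrArg ZMod.val h

lemma two_le_addOrderOf {G : Type*} [AddGroup G] [Finite G] {d : G} (hd : d ≠ 0) :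
    2 ≤ addOrderOf d := by
  have h0 : addOrderOf d ≠ 0 := (addOrderOf_pos d).ne'
  have h1 : addOrderOf d ≠ 1 := mt AddMonoid.addOrderOf_eq_one_iff.mp hd
  omega

lemma eq_of_pair_eq_pair {α : Type*} [LinearOrder α] {p p' : α × α}
    (hp : p.1 < p.2) (hp' : p'.1 < p'.2)
    (h : ({p.1, p.2} : Finset α) = {p'.1, p'.2}) : p = p' := by
  have := congrArg (fun s : Finset α => (s : Set α)) h
  simp only [Finset.coe_pair, Set.pair_eq_pair_iff] at this
  rcases this with ⟨h1, h2⟩ | ⟨h1, h2⟩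
  · exact Prod.ext h1 h2
  · exact absurd hp' (by rw [← h1, ← h2]; exact lt_asymm hp)

namespace ODAR

section Partition

lemma hasDist3Partition_of_injOn {m g k s : ℕ} {C ι : Type*} [Fintype C] {I : Finset ι}
    (hC : Fintype.card C = k) (hI : #I = s) (w : C → ι → Fin m → Fin (g + 1))
    (hinj : ∀ c c', ∀ p ∈ I, ∀ p' ∈ I, w c p = w c' p' → c = c' ∧ p = p')
    (hrange : ∀ x, x ∈ weightTwoWords m g ↔ ∃ c, ∃ p ∈ I, w c p = x)
    (hdist : ∀ c, ∀ p ∈ I, ∀ p' ∈ I, p ≠ p' → 3 ≤ hammingDist (w c p) (w c p')) :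
    HasDist3Partition m g k s := by
  classical
  let e := Fintype.equivFinOfCardEq hC
  refine ⟨fun a => I.image (w (e.symm a)), ?_, ?_, ?_, ?_⟩
  · intro a b hab
    refine Finset.disjoint_left.mpr ?_
    simp only [Finset.mem_image]
    rintro _ ⟨p, hp, rfl⟩ ⟨p', hp', h⟩
    exact hab (e.symm.injective (hinj _ _ _ hp' _ hp h).1).symm
  · ext x
    simp only [Finset.mem_biUnion, Finset.mem_univ, true_and, Finset.mem_image, hrange]
    exact ⟨fun ⟨a, p, hp, h⟩ => ⟨_, p, hp, h⟩, fun ⟨c, p, hp, h⟩ => ⟨e c, p, hp, by simpa⟩⟩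
  · intro a
    rw [Finset.card_image_of_injOn fun p hp p' hp' h => (hinj _ _ p hp p' hp' h).2, hI]
  · simp only [Finset.mem_image]
    rintro a _ ⟨p, hp, rfl⟩ _ ⟨p', hp', rfl⟩ hne
    exact hdist _ p hp p' hp' fun h => hne (h ▸ rfl)

variable {ι α : Type*} [Fintype ι] [Zero α] [DecidableEq α]

def wordSupport (x : ι → α) : Finset ι :=
  {i | x i ≠ 0}

@[simp]
lemma mem_wordSupport {x : ι → α} {i : ι} : i ∈ wordSupport x ↔ x i ≠ 0 := by
  simp [wordSupport]

lemma mem_weightTwoWords_iff {m g : ℕ} {x : Fin m → Fin (g + 1)} :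
    x ∈ weightTwoWords m g ↔ #(wordSupport x) = 2 := by
  simp [weightTwoWords, wordWeight, wordSupport, Fin.val_eq_zero_iff]

lemma three_le_hammingDist_of_wordSupport [DecidableEq ι] {x y : ι → α}
    (hx : #(wordSupport x) = 2) (hy : #(wordSupport y) = 2) (hxy : wordSupport x ≠ wordSupport y)
    (hshared : ∀ t ∈ wordSupport x, t ∈ wordSupport y → x t ≠ y t) :
    3 ≤ hammingDist x y := by
  have hsub : wordSupport x ∪ wordSupport y ⊆ ({t | x t ≠ y t} : Finset ι) := by
    intro t ht
    by_cases htx : t ∈ wordSupport x <;> by_cases hty : t ∈ wordSupport y <;>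
      simp_all [eq_comm]
  have hlt : wordSupport y ⊂ wordSupport x ∪ wordSupport y := by
    refine Finset.ssubset_iff_subset_ne.mpr ⟨Finset.subset_union_right, fun h => hxy ?_⟩
    exact Finset.eq_of_subset_of_card_le (h ▸ Finset.subset_union_left) (by omega)
  have := Finset.card_lt_card hlt
  exact (by omega : 3 ≤ #(wordSupport x ∪ wordSupport y)).trans (Finset.card_le_card hsub)

end Partition

section Rows

variable {g k : ℕ}

/-- Positions `x` and `x'` of `ℤ_{2k+1}` at the largest cyclic distance `k`. -/
def Antipodal (k x x' : ℕ) : Prop :=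
  x = x' + k ∨ x' = x + k ∨ x = x' + (k + 1) ∨ x' = x + (k + 1)

structure IsRowSystem (k : ℕ) (A B : ZMod g → ℕ → ZMod g) : Prop where
  sub_eq : ∀ d x, A d x - B d x = if x ≤ k then d else -d
  collision_A : ∀ d x x', x < 2 * k + 1 → x' < 2 * k + 1 → A d x = A d x' →
    x = x' ∨ Antipodal k x x'
  collision_B : ∀ d x x', x < 2 * k + 1 → x' < 2 * k + 1 → B d x = B d x' →
    x = x' ∨ Antipodal k x x'
  collision_AB : ∀ d x x', x < 2 * k + 1 → x' < 2 * k + 1 → A d x = B d x' →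
    x = x' ∨ x = x' + 1

/-- The value at position `e` of a class word with parameter `d` whose other position is `f`:
the pair has colour `r = e + f mod 2k+1`, and `e` reads row `A` if `f` lies at most `k` steps
after `e` in `ℤ_{2k+1}`, row `B` otherwise. -/
def leg (k : ℕ) (A B : ZMod g → ℕ → ZMod g) (d : ZMod g) (e f : ℕ) : ZMod g :=
  if (f + (2 * k + 1) - e) % (2 * k + 1) ≤ k then A d ((e + f) % (2 * k + 1))
  else B d ((e + f) % (2 * k + 1))

variable {A B : ZMod g → ℕ → ZMod g} {e f f' : ℕ}

lemma eq_of_leg_eq_leg (hR : IsRowSystem k A B) (d : ZMod g) (he : e < 2 * k + 1)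
    (hf : f < 2 * k + 1) (hf' : f' < 2 * k + 1) (hef : e ≠ f) (hef' : e ≠ f')
    (h : leg k A B d e f = leg k A B d e f') : f = f' := by
  -- Colours and offsets `(f - e) mod (2k+1)` of the two pairs differ by the same amount. Offsets on
  -- the same side of `k` differ by less than `k`, and an `A`-offset minus a `B`-offset is one of
  -- `2, …, 2k` mod `2k+1`: the collision conditions allow neither.
  have := Nat.mod_eq_self_or_sub (n := 2 * k + 1) (z := f + (2 * k + 1) - e) (by omega)
  have := Nat.mod_eq_self_or_sub (n := 2 * k + 1) (z := f' + (2 * k + 1) - e) (by omega)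
  have := Nat.mod_eq_self_or_sub (n := 2 * k + 1) (z := e + f) (by omega)
  have := Nat.mod_eq_self_or_sub (n := 2 * k + 1) (z := e + f') (by omega)
  have hr := Nat.mod_lt (e + f) (by omega : 0 < 2 * k + 1)
  have hr' := Nat.mod_lt (e + f') (by omega : 0 < 2 * k + 1)
  unfold leg at h
  split_ifs at h
  · have := hR.collision_A d _ _ hr hr' h; unfold Antipodal at this; omega
  · have := hR.collision_AB d _ _ hr hr' h; omega
  · have := hR.collision_AB d _ _ hr' hr h.symm; omega
  · have := hR.collision_B d _ _ hr hr' h; unfold Antipodal at this; omega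

lemma exists_leg_sub_leg (hR : IsRowSystem k A B) (he : e < 2 * k + 1)
    (hf : f < 2 * k + 1) (hef : e ≠ f) :
    ∃ τ : ZMod g, τ * τ = 1 ∧ ∀ d, leg k A B d e f - leg k A B d f e = τ * d := by
  -- Both ends have the same colour and exactly one of them reads row `A`.
  have := Nat.mod_eq_self_or_sub (n := 2 * k + 1) (z := f + (2 * k + 1) - e) (by omega)
  have := Nat.mod_eq_self_or_sub (n := 2 * k + 1) (z := e + (2 * k + 1) - f) (by omega)
  set r := (e + f) % (2 * k + 1)
  refine ⟨(if (f + (2 * k + 1) - e) % (2 * k + 1) ≤ k then 1 else -1) *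
    (if r ≤ k then 1 else -1), by split_ifs <;> ring, fun d => ?_⟩
  have hsub := hR.sub_eq d r
  simp only [leg, add_comm f e]
  split_ifs at hsub ⊢ <;> first | omega | linear_combination hsub | linear_combination -hsub

lemma exists_unique_class (hR : IsRowSystem k A B) (he : e < 2 * k + 1)
    (hf : f < 2 * k + 1) (hef : e ≠ f) (α β : ZMod g) :
    ∃! c : ZMod g × ZMod g, c.1 + leg k A B c.2 e f = α ∧ c.1 + leg k A B c.2 f e = β := by
  obtain ⟨τ, hτ, hleg⟩ := exists_leg_sub_leg hR he hf hef
  refine ⟨(α - leg k A B (τ * (α - β)) e f, τ * (α - β)), ⟨by ring, ?_⟩, ?_⟩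
  · linear_combination (-1 : ZMod g) * hleg (τ * (α - β)) - (α - β) * hτ
  · rintro ⟨κ, d⟩ ⟨h1, h2⟩
    have hd : d = τ * (α - β) := by
      linear_combination τ * h1 - τ * h2 - τ * hleg d - d * hτ
    subst hd
    exact Prod.ext (by linear_combination h1) rfl

end Rows

section ClassWords

variable {g k : ℕ} [NeZero g]

def symbol (a : ZMod g) : Fin (g + 1) := ((ZMod.finEquiv g).symm a).succ

lemma symbol_injective : Function.Injective (symbol (g := g)) :=
  (Fin.succ_injective g).comp (ZMod.finEquiv g).symm.injective

lemma symbol_ne_zero (a : ZMod g) : symbol a ≠ 0 := Fin.succ_ne_zero _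

lemma exists_symbol_eq {v : Fin (g + 1)} (hv : v ≠ 0) : ∃ a : ZMod g, symbol a = v := by
  obtain ⟨w, rfl⟩ := Fin.exists_succ_eq.mpr hv
  exact ⟨ZMod.finEquiv g w, by simp [symbol]⟩

variable {A B : ZMod g → ℕ → ZMod g}

def classWord (k : ℕ) (A B : ZMod g → ℕ → ZMod g) (c : ZMod g × ZMod g)
    (p : Fin (2 * k + 1) × Fin (2 * k + 1)) : Fin (2 * k + 1) → Fin (g + 1) := fun t =>
  if t = p.1 then symbol (c.1 + leg k A B c.2 p.1 p.2)
  else if t = p.2 then symbol (c.1 + leg k A B c.2 p.2 p.1) else 0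

lemma wordSupport_classWord (c : ZMod g × ZMod g) {p : Fin (2 * k + 1) × Fin (2 * k + 1)}
    (hp : p.1 ≠ p.2) : wordSupport (classWord k A B c p) = {p.1, p.2} := by
  ext t
  simp only [mem_wordSupport, classWord, Finset.mem_insert, Finset.mem_singleton]
  split_ifs <;> simp_all [symbol_ne_zero]

lemma classWord_apply_of_mem (c : ZMod g × ZMod g) {p : Fin (2 * k + 1) × Fin (2 * k + 1)}
    (hp : p.1 ≠ p.2) {e : Fin (2 * k + 1)} (he : e ∈ ({p.1, p.2} : Finset _)) :
    ∃ f, f ≠ e ∧ ({p.1, p.2} : Finset _) = {e, f} ∧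
      classWord k A B c p e = symbol (c.1 + leg k A B c.2 e f) := by
  obtain rfl | rfl : e = p.1 ∨ e = p.2 := by simpa using he
  · exact ⟨p.2, hp.symm, rfl, by simp [classWord]⟩
  · exact ⟨p.1, hp, Finset.pair_comm _ _, by simp [classWord, hp.symm]⟩

lemma eq_of_classWord_eq (hR : IsRowSystem k A B) {c c' : ZMod g × ZMod g}
    {p p' : Fin (2 * k + 1) × Fin (2 * k + 1)} (hp : p.1 < p.2) (hp' : p'.1 < p'.2)
    (h : classWord k A B c p = classWord k A B c' p') : c = c' ∧ p = p' := by
  obtain rfl : p = p' := by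
    refine eq_of_pair_eq_pair hp hp' ?_
    rw [← wordSupport_classWord (A := A) (B := B) c hp.ne, h, wordSupport_classWord c' hp'.ne]
  have h1 := congrFun h p.1
  have h2 := congrFun h p.2
  simp only [classWord, ↓reduceIte, if_neg hp.ne', symbol_injective.eq_iff] at h1 h2
  exact ⟨(exists_unique_class hR p.1.isLt p.2.isLt (Fin.val_ne_of_ne hp.ne) _ _).unique
    ⟨rfl, rfl⟩ ⟨h1.symm, h2.symm⟩, rfl⟩

lemma exists_classWord_eq (hR : IsRowSystem k A B) {x : Fin (2 * k + 1) → Fin (g + 1)}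
    (hx : x ∈ weightTwoWords (2 * k + 1) g) :
    ∃ c, ∃ p : Fin (2 * k + 1) × Fin (2 * k + 1), p.1 < p.2 ∧ classWord k A B c p = x := by
  obtain ⟨p, hp, hsupp⟩ : ∃ p : Fin (2 * k + 1) × Fin (2 * k + 1),
      p.1 < p.2 ∧ wordSupport x = {p.1, p.2} := by
    obtain ⟨a, b, hab, h⟩ := Finset.card_eq_two.mp (mem_weightTwoWords_iff.mp hx)
    rcases hab.lt_or_gt with hab | hab
    · exact ⟨(a, b), hab, h⟩
    · exact ⟨(b, a), hab, h.trans (Finset.pair_comm a b)⟩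
  have hmem : ∀ t, x t ≠ 0 ↔ t = p.1 ∨ t = p.2 := fun t => by
    rw [← mem_wordSupport, hsupp, Finset.mem_insert, Finset.mem_singleton]
  obtain ⟨α, hα⟩ := exists_symbol_eq ((hmem p.1).mpr (.inl rfl))
  obtain ⟨β, hβ⟩ := exists_symbol_eq ((hmem p.2).mpr (.inr rfl))
  obtain ⟨c, ⟨h1, h2⟩, -⟩ :=
    exists_unique_class hR p.1.isLt p.2.isLt (Fin.val_ne_of_ne hp.ne) α β
  refine ⟨c, p, hp, funext fun t => ?_⟩
  by_cases ht1 : t = p.1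
  · simp [classWord, ht1, h1, hα]
  by_cases ht2 : t = p.2
  · simp [classWord, ht2, hp.ne', h2, hβ]
  simp only [classWord, ht1, ht2, if_false]
  by_contra h
  rcases (hmem t).mp (Ne.symm h) with h | h <;> contradiction

lemma three_le_hammingDist_classWord (hR : IsRowSystem k A B) (c : ZMod g × ZMod g)
    {p p' : Fin (2 * k + 1) × Fin (2 * k + 1)} (hp : p.1 < p.2) (hp' : p'.1 < p'.2)
    (hpp' : p ≠ p') : 3 ≤ hammingDist (classWord k A B c p) (classWord k A B c p') := by
  have hS := wordSupport_classWord (A := A) (B := B) c hp.ne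
  have hS' := wordSupport_classWord (A := A) (B := B) c hp'.ne
  have hne : ({p.1, p.2} : Finset _) ≠ {p'.1, p'.2} := fun h => hpp' (eq_of_pair_eq_pair hp hp' h)
  refine three_le_hammingDist_of_wordSupport (by rw [hS, Finset.card_pair hp.ne])
    (by rw [hS', Finset.card_pair hp'.ne]) (by rwa [hS, hS']) fun t ht ht' => ?_
  rw [hS] at ht
  rw [hS'] at ht'
  obtain ⟨f, hf, hpf, hxf⟩ := classWord_apply_of_mem c hp.ne ht
  obtain ⟨f', hf', hpf', hyf⟩ := classWord_apply_of_mem c hp'.ne ht'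
  rw [hxf, hyf, Ne, symbol_injective.eq_iff, add_right_inj]
  intro h
  have := eq_of_leg_eq_leg hR c.2 t.isLt f.isLt f'.isLt (Fin.val_ne_of_ne hf.symm)
    (Fin.val_ne_of_ne hf'.symm) h
  exact hne (by rw [hpf, hpf', Fin.ext this])

theorem isODAR_of_isRowSystem (hR : IsRowSystem k A B) : IsODAR (2 * k + 1) g := by
  refine hasDist3Partition_of_injOn (C := ZMod g × ZMod g)
    (I := {p : Fin (2 * k + 1) × Fin (2 * k + 1) | p.1 < p.2}) (by simp [sq]) ?_
    (classWord k A B) ?_ ?_ ?_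
  · rw [← Finset.univ_product_univ, Finset.card_product_filter_lt, Finset.card_univ,
      Fintype.card_fin]
  · simp only [Finset.mem_filter, Finset.mem_univ, true_and]
    exact fun c c' p hp p' hp' h => eq_of_classWord_eq hR hp hp' h
  · simp only [Finset.mem_filter, Finset.mem_univ, true_and]
    refine fun x => ⟨exists_classWord_eq hR, ?_⟩
    rintro ⟨c, p, hp, rfl⟩
    rw [mem_weightTwoWords_iff, wordSupport_classWord c hp.ne, Finset.card_pair hp.ne]
  · simp only [Finset.mem_filter, Finset.mem_univ, true_and]
    exact fun c p hp p' hp' => three_le_hammingDist_classWord hR c hp hp'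

end ClassWords

section CosetWalk

variable {g k : ℕ}

lemma eq_and_dvd_of_add_mul_eq [NeZero g] {d : ZMod g} {J J' : ℕ} (hJ : J < g.gcd d.val)
    (hJ' : J' < g.gcd d.val) {s s' : ℤ} (h : (J : ZMod g) + s * d = J' + s' * d) :
    J = J' ∧ (addOrderOf d : ℤ) ∣ s - s' := by
  have hγg : (g.gcd d.val : ℤ) ∣ g := Int.natCast_dvd_natCast.mpr (Nat.gcd_dvd_left _ _)
  have hγd : (g.gcd d.val : ℤ) ∣ d.val := Int.natCast_dvd_natCast.mpr (Nat.gcd_dvd_right _ _)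
  have hdvd : (g.gcd d.val : ℤ) ∣ (J - J' : ℤ) := by
    have h0 : (((J - J' : ℤ) + (s - s') * d.val : ℤ) : ZMod g) = 0 := by
      push_cast
      rw [ZMod.natCast_zmod_val]
      linear_combination h
    rw [ZMod.intCast_zmod_eq_zero_iff_dvd] at h0
    exact (dvd_add_left (hγd.mul_left _)).mp (hγg.trans h0)
  obtain rfl : J = J' := by
    have := Int.eq_zero_of_abs_lt_dvd hdvd (by rw [abs_lt]; omega)
    omega
  refine ⟨rfl, addOrderOf_dvd_iff_zsmul_eq_zero.mpr ?_⟩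
  rw [zsmul_eq_mul]
  push_cast
  linear_combination h

lemma gcd_val_mul_addOrderOf [NeZero g] (d : ZMod g) : g.gcd d.val * addOrderOf d = g := by
  have h := ZMod.addOrderOf_coe d.val (NeZero.ne g)
  rw [ZMod.natCast_zmod_val] at h
  rw [h]
  exact Nat.mul_div_cancel' (Nat.gcd_dvd_left _ _)

/-- Coset coordinates `(J, s)` of position `x`, the row value there being `J + s • d` for `d` of
order `m`: a position `x ≤ k` with `⌈Jm/2⌉ ≤ x < ⌈(J+1)m/2⌉` is `x - ⌈Jm/2⌉` steps back from `J`,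
a position `k + 1 + y` with `⌊Jm/2⌋ ≤ y < ⌊(J+1)m/2⌋` is `y - ⌊Jm/2⌋` steps forward. -/
def coord (m k x : ℕ) : ℕ × ℤ :=
  if x ≤ k then (2 * x / m, ((2 * x / m * m + 1) / 2 : ℕ) - (x : ℤ))
  else ((2 * (x - (k + 1)) + 1) / m,
    ((x - (k + 1) : ℕ) : ℤ) - ((2 * (x - (k + 1)) + 1) / m * m / 2 : ℕ))

lemma coord_spec {m : ℕ} (hm : 0 < m) (x : ℕ) :
    (x ≤ k → (coord m k x).1 * m ≤ 2 * x ∧ 2 * x < (coord m k x).1 * m + m ∧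
      (coord m k x).2 = (((coord m k x).1 * m + 1) / 2 : ℕ) - (x : ℤ)) ∧
    (k < x → (coord m k x).1 * m ≤ 2 * (x - (k + 1)) + 1 ∧
      2 * (x - (k + 1)) + 1 < (coord m k x).1 * m + m ∧
      (coord m k x).2 = ((x - (k + 1) : ℕ) : ℤ) - ((coord m k x).1 * m / 2 : ℕ)) := by
  refine ⟨fun hx => ?_, fun hx => ?_⟩
  · rw [coord, if_pos hx]
    exact ⟨Nat.div_mul_le_self _ _, Nat.lt_div_mul_add hm, rfl⟩
  · rw [coord, if_neg (not_le.mpr hx)]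
    exact ⟨Nat.div_mul_le_self _ _, Nat.lt_div_mul_add hm, rfl⟩

variable {d : ZMod g} {x x' : ℕ}

lemma coord_fst_lt_gcd [NeZero g] (hd : d ≠ 0) (hg : 2 * k + 1 ≤ g) (hx : x < 2 * k + 1) :
    (coord (addOrderOf d) k x).1 < g.gcd d.val := by
  have hm := two_le_addOrderOf hd
  have hspec := coord_spec (k := k) (by omega : 0 < addOrderOf d) x
  refine Nat.lt_of_mul_lt_mul_right (a := addOrderOf d) ?_
  rw [gcd_val_mul_addOrderOf]
  omega

noncomputable def plusRow (k : ℕ) (d : ZMod g) (x : ℕ) : ZMod g :=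
  if d = 0 then x
  else ((coord (addOrderOf d) k x).1 : ZMod g) + (coord (addOrderOf d) k x).2 * d

noncomputable def minusRow (k : ℕ) (d : ZMod g) (x : ℕ) : ZMod g :=
  plusRow k d x - if x ≤ k then d else -d

lemma minusRow_of_ne_zero (hd : d ≠ 0) (x : ℕ) :
    minusRow k d x = ((coord (addOrderOf d) k x).1 : ZMod g) +
      (((coord (addOrderOf d) k x).2 - if x ≤ k then 1 else -1 : ℤ) : ZMod g) * d := by
  rw [minusRow, plusRow, if_neg hd]
  split_ifs <;> push_cast <;> ring

lemma eq_or_antipodal_of_plusRow_eq [NeZero g] (hd : d ≠ 0) (hg : 2 * k + 1 ≤ g)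
    (hx : x < 2 * k + 1) (hx' : x' < 2 * k + 1) (h : plusRow k d x = plusRow k d x') :
    x = x' ∨ Antipodal k x x' := by
  simp only [plusRow, if_neg hd] at h
  obtain ⟨hJ, hdvd⟩ :=
    eq_and_dvd_of_add_mul_eq (coord_fst_lt_gcd hd hg hx) (coord_fst_lt_gcd hd hg hx') h
  have hm := two_le_addOrderOf hd
  have hspec := coord_spec (k := k) (by omega : 0 < addOrderOf d) x
  have hspec' := coord_spec (k := k) (by omega : 0 < addOrderOf d) x'
  rw [hJ] at hspec
  unfold Antipodal
  rcases Int.eq_zero_or_eq_or_eq_neg_of_dvd (by omega) hdvd (by omega) (by omega) with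
    h0 | h0 | h0 <;> omega

lemma eq_or_antipodal_of_minusRow_eq [NeZero g] (hd : d ≠ 0) (hg : 2 * k + 1 ≤ g)
    (hx : x < 2 * k + 1) (hx' : x' < 2 * k + 1) (h : minusRow k d x = minusRow k d x') :
    x = x' ∨ Antipodal k x x' := by
  rw [minusRow_of_ne_zero hd, minusRow_of_ne_zero hd] at h
  obtain ⟨hJ, hdvd⟩ :=
    eq_and_dvd_of_add_mul_eq (coord_fst_lt_gcd hd hg hx) (coord_fst_lt_gcd hd hg hx') h
  have hm := two_le_addOrderOf hd
  have hspec := coord_spec (k := k) (by omega : 0 < addOrderOf d) x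
  have hspec' := coord_spec (k := k) (by omega : 0 < addOrderOf d) x'
  rw [hJ] at hspec
  unfold Antipodal
  split_ifs at hdvd <;>
    rcases Int.eq_zero_or_eq_or_eq_neg_of_dvd (by omega) hdvd (by omega) (by omega) with
      h0 | h0 | h0 <;> omega

lemma eq_or_eq_succ_of_plusRow_eq_minusRow [NeZero g] (hd : d ≠ 0) (hg : 2 * k + 1 ≤ g)
    (hx : x < 2 * k + 1) (hx' : x' < 2 * k + 1) (h : plusRow k d x = minusRow k d x') :
    x = x' ∨ x = x' + 1 := by
  rw [minusRow_of_ne_zero hd] at h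
  simp only [plusRow, if_neg hd] at h
  obtain ⟨hJ, hdvd⟩ :=
    eq_and_dvd_of_add_mul_eq (coord_fst_lt_gcd hd hg hx) (coord_fst_lt_gcd hd hg hx') h
  have hm := two_le_addOrderOf hd
  have hspec := coord_spec (k := k) (by omega : 0 < addOrderOf d) x
  have hspec' := coord_spec (k := k) (by omega : 0 < addOrderOf d) x'
  rw [hJ] at hspec
  split_ifs at hdvd <;>
    rcases Int.eq_zero_or_eq_or_eq_neg_of_dvd (by omega) hdvd (by omega) (by omega) with
      h0 | h0 | h0 <;> omega

theorem isRowSystem_plusRow_minusRow [NeZero g] (hg : 2 * k + 1 ≤ g) :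
    IsRowSystem k (plusRow (g := g) k) (minusRow k) where
  sub_eq d x := by rw [minusRow]; ring
  collision_A d x x' hx hx' h := by
    by_cases hd : d = 0
    · exact .inl (ZMod.natCast_injOn_Iio g (show x < g by omega) (show x' < g by omega)
        (by simpa [plusRow, hd] using h))
    · exact eq_or_antipodal_of_plusRow_eq hd hg hx hx' h
  collision_B d x x' hx hx' h := by
    by_cases hd : d = 0
    · exact .inl (ZMod.natCast_injOn_Iio g (show x < g by omega) (show x' < g by omega)
        (by simpa [minusRow, plusRow, hd] using h))
    · exact eq_or_antipodal_of_minusRow_eq hd hg hx hx' h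
  collision_AB d x x' hx hx' h := by
    by_cases hd : d = 0
    · exact .inl (ZMod.natCast_injOn_Iio g (show x < g by omega) (show x' < g by omega)
        (by simpa [minusRow, plusRow, hd] using h))
    · exact eq_or_eq_succ_of_plusRow_eq_minusRow hd hg hx hx' h

end CosetWalk

end ODAR

theorem exists_ODAR_of_odd_general (n g : ℕ) (hno : Odd n) (hng : n ≤ g) :
    IsODAR n g := by
  obtain ⟨k, rfl⟩ := hno
  have : NeZero g := ⟨by omega⟩
  exact ODAR.isODAR_of_isRowSystem (ODAR.isRowSystem_plusRow_minusRow hng)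

/-- For every odd `n ≥ 3` and every `g` with `n ≤ g`, an `ODAR(n,g)` exists. -/
theorem exists_ODAR_of_odd (n g : ℕ) (hn3 : 3 ≤ n) (hno : Odd n) (hng : n ≤ g) :
    IsODAR n g :=
  exists_ODAR_of_odd_general n g hno hng
end

section
/- For every odd prime power g, there exists an OF(g+1, g), i.e., a partition of the set of all words of length g+1 and weight 2 over ℤ_{g+1} into g² subsets such that each subset has cardinality g(g+1)/2 and any two distinct words lying in the same subset have Hamming distance at least 3. -/
open Finset
set_option linter.unusedSectionVars false

section Vpart
variable {K : Type} [Field K]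

/-- Value placed at position `i` when paired with position `j`, in the class `(s,t)`. -/
def Vfun (s t : K) : Option K → Option K → K
  | some a, some b => s + t * a + b
  | some a, none => s + (t + 1) * a
  | none, some b => t - b
  | none, none => 0

lemma Vfun_latin (s t : K) {i j j' : Option K} (hj : j ≠ i) (hj' : j' ≠ i)
    (h : Vfun s t i j = Vfun s t i j') : j = j' := by
  rcases i with _ | a <;> rcases j with _ | b <;> rcases j' with _ | b'
  · rfl
  · exact absurd rfl hj
  · exact absurd rfl hj'
  · simp only [Vfun] at h
    have : b = b' := by linear_combination -h
    rw [this]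
  · rfl
  · simp only [Vfun] at h
    have : b' = a := by linear_combination -h
    exact absurd (by rw [this]) hj'
  · simp only [Vfun] at h
    have : b = a := by linear_combination h
    exact absurd (by rw [this]) hj
  · simp only [Vfun] at h
    have : b = b' := by linear_combination h
    rw [this]

lemma Vfun_pair_inj {i j : Option K} (hij : i ≠ j) {s t s' t' : K}
    (h1 : Vfun s t i j = Vfun s' t' i j) (h2 : Vfun s t j i = Vfun s' t' j i) :
    s = s' ∧ t = t' := by
  rcases i with _ | a <;> rcases j with _ | b
  · exact absurd rfl hij
  · simp only [Vfun] at h1 h2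
    have ht : t = t' := by linear_combination h1
    subst ht
    exact ⟨by linear_combination h2, rfl⟩
  · simp only [Vfun] at h1 h2
    have ht : t = t' := by linear_combination h2
    subst ht
    exact ⟨by linear_combination h1, rfl⟩
  · have hab : a ≠ b := fun h => hij (by rw [h])
    simp only [Vfun] at h1 h2
    have ht : (t - t') * (a - b) = 0 := by linear_combination h1 - h2
    rcases mul_eq_zero.1 ht with h | h
    · have ht' : t = t' := by linear_combination h
      subst ht'
      exact ⟨by linear_combination h1, rfl⟩
    · exact absurd (by linear_combination h) hab

lemma Vfun_pair_surj {i j : Option K} (hij : i ≠ j) (x y : K) :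
    ∃ s t, Vfun s t i j = x ∧ Vfun s t j i = y := by
  rcases i with _ | a <;> rcases j with _ | b
  · exact absurd rfl hij
  · exact ⟨y - (x + b + 1) * b, x + b, by simp only [Vfun]; ring, by simp only [Vfun]; ring⟩
  · exact ⟨x - (y + a + 1) * a, y + a, by simp only [Vfun]; ring, by simp only [Vfun]; ring⟩
  · have hab : a - b ≠ 0 := sub_ne_zero.2 (fun h => hij (by rw [h]))
    refine ⟨x - ((x - y) / (a - b) + 1) * a - b, (x - y) / (a - b) + 1, by simp only [Vfun]; ring, ?_⟩
    simp only [Vfun]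
    field_simp
    ring
end Vpart

section Words
variable {K : Type} [Field K] [Fintype K] [DecidableEq K] {g : ℕ}

/-- The weight-2 word associated to class `(s,t)` and the pair of positions `{i,j}`. -/
def wrd (e : Fin (g + 1) ≃ Option K) (ψ : K → Fin (g + 1)) (s t : K) (i j : Option K) :
    Fin (g + 1) → Fin (g + 1) :=
  fun p => if e p = i then ψ (Vfun s t i j) else if e p = j then ψ (Vfun s t j i) else 0

variable (e : Fin (g + 1) ≃ Option K) (ψ : K → Fin (g + 1))

lemma wrd_symm (s t : K) {i j : Option K} (hij : i ≠ j) :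
    wrd e ψ s t i j = wrd e ψ s t j i := by
  funext p
  unfold wrd
  by_cases h1 : e p = i
  · rw [if_pos h1, if_neg (h1 ▸ hij), if_pos h1]
  · by_cases h2 : e p = j
    · rw [if_neg h1, if_pos h2, if_pos h2]
    · rw [if_neg h1, if_neg h2, if_neg h2, if_neg h1]

lemma wrd_self {p q : Fin (g + 1)} (s t : K) :
    wrd e ψ s t (e p) (e q) p = ψ (Vfun s t (e p) (e q)) := by
  unfold wrd; rw [if_pos rfl]

lemma wrd_other {p q : Fin (g + 1)} (s t : K) (hpq : p ≠ q) :
    wrd e ψ s t (e p) (e q) q = ψ (Vfun s t (e q) (e p)) := by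
  unfold wrd
  rw [if_neg (fun h => hpq (e.injective h).symm), if_pos rfl]

lemma wrd_zero {p q r : Fin (g + 1)} (s t : K) (hrp : r ≠ p) (hrq : r ≠ q) :
    wrd e ψ s t (e p) (e q) r = 0 := by
  unfold wrd
  rw [if_neg (fun h => hrp (e.injective h)), if_neg (fun h => hrq (e.injective h))]

variable (hψ0 : ∀ k, ψ k ≠ 0) (hψinj : Function.Injective ψ)

set_option linter.unusedSectionVars false

include hψ0 in
/-- The support of a word. -/
lemma wrd_support {p q : Fin (g + 1)} (s t : K) (hpq : p ≠ q) :
    (Finset.univ.filter fun r => ((wrd e ψ s t (e p) (e q) r : ℕ) ≠ 0)) = {p, q} := by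
  ext r
  simp only [mem_filter, mem_univ, true_and, mem_insert, mem_singleton]
  have hcoe : ∀ v : Fin (g + 1), (v : ℕ) ≠ 0 ↔ v ≠ 0 := fun v =>
    not_congr ⟨fun h => Fin.ext (by simp [h]), fun h => by rw [h]; rfl⟩
  rw [hcoe]
  constructor
  · intro h
    by_contra hc
    push_neg at hc
    exact h (wrd_zero e ψ s t hc.1 hc.2)
  · rintro (rfl | rfl)
    · rw [wrd_self]; exact hψ0 _
    · rw [wrd_other e ψ s t hpq]; exact hψ0 _

include hψ0 in
lemma wrd_weight {p q : Fin (g + 1)} (s t : K) (hpq : p ≠ q) :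
    wordWeight (wrd e ψ s t (e p) (e q)) = 2 := by
  unfold wordWeight
  rw [wrd_support e ψ hψ0 s t hpq, Finset.card_pair hpq]


include hψ0 in
lemma wrd_diff_out {p q p' q' r : Fin (g + 1)} (s t s' t' : K) (hpq : p ≠ q)
    (hr : r = p ∨ r = q) (h1 : r ≠ p') (h2 : r ≠ q') :
    wrd e ψ s t (e p) (e q) r ≠ wrd e ψ s' t' (e p') (e q') r := by
  rw [wrd_zero e ψ s' t' h1 h2]
  rcases hr with rfl | rfl
  · rw [wrd_self]; exact hψ0 _
  · rw [wrd_other e ψ s t hpq]; exact hψ0 _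

include hψinj in
lemma wrd_diff_shared {p q q'' : Fin (g + 1)} (s t : K) (hpq : p ≠ q) (hpq'' : p ≠ q'')
    (hqq : q ≠ q'') :
    wrd e ψ s t (e p) (e q) p ≠ wrd e ψ s t (e p) (e q'') p := by
  rw [wrd_self, wrd_self]
  intro h
  exact hqq (e.injective (Vfun_latin s t (fun hh => hpq (e.injective hh).symm)
    (fun hh => hpq'' (e.injective hh).symm) (hψinj h)))

lemma three_le_hammingDist {n m : ℕ} {x y : Fin n → Fin m} (a b c : Fin n)
    (hab : a ≠ b) (hac : a ≠ c) (hbc : b ≠ c)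
    (ha : x a ≠ y a) (hb : x b ≠ y b) (hc : x c ≠ y c) : 3 ≤ hammingDist x y := by
  have hsub : ({a, b, c} : Finset (Fin n)) ⊆ Finset.univ.filter fun i => x i ≠ y i := by
    intro r hr
    simp only [mem_insert, mem_singleton] at hr
    rcases hr with rfl | rfl | rfl <;> simp [ha, hb, hc]
  have hcard : ({a, b, c} : Finset (Fin n)).card = 3 := by
    rw [card_insert_of_notMem (by simp [hab, hac]),
      card_insert_of_notMem (by simp [hbc]), card_singleton]
  calc (3 : ℕ) = ({a, b, c} : Finset (Fin n)).card := hcard.symm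
    _ ≤ (Finset.univ.filter fun i => x i ≠ y i).card := card_le_card hsub
    _ = hammingDist x y := rfl

include hψ0 hψinj in
lemma wrd_dist {p q p' q' : Fin (g + 1)} (s t : K) (hpq : p < q) (hpq' : p' < q')
    (hne : ¬(p = p' ∧ q = q')) :
    3 ≤ hammingDist (wrd e ψ s t (e p) (e q)) (wrd e ψ s t (e p') (e q')) := by
  by_cases h1 : p = p'
  · subst h1
    have hqq' : q ≠ q' := fun h => hne ⟨rfl, h⟩
    exact three_le_hammingDist p q q' (ne_of_lt hpq) (ne_of_lt hpq') hqq'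
      (wrd_diff_shared e ψ hψinj s t (ne_of_lt hpq) (ne_of_lt hpq') hqq')
      (wrd_diff_out e ψ hψ0 s t s t (ne_of_lt hpq) (Or.inr rfl) (ne_of_lt hpq).symm hqq')
      ((wrd_diff_out e ψ hψ0 s t s t (ne_of_lt hpq') (Or.inr rfl) (ne_of_lt hpq').symm
        hqq'.symm).symm)
  · by_cases h2 : p = q'
    · subst h2
      have hq'p : p' < p := hpq'
      have hqp' : q ≠ p' := (ne_of_lt (lt_trans hq'p hpq)).symm
      have hpp' : p ≠ p' := Ne.symm (ne_of_lt hq'p)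
      rw [wrd_symm e ψ s t (fun h => hpp'.symm (e.injective h))]
      exact three_le_hammingDist p q p' (ne_of_lt hpq) hpp' hqp'
        (wrd_diff_shared e ψ hψinj s t (ne_of_lt hpq) hpp' hqp')
        (wrd_diff_out e ψ hψ0 s t s t (ne_of_lt hpq) (Or.inr rfl) (ne_of_lt hpq).symm hqp')
        ((wrd_diff_out e ψ hψ0 s t s t hpp' (Or.inr rfl) hpp'.symm hqp'.symm).symm)
    · by_cases h3 : q = p'
      · subst h3
        have hpq'' : p ≠ q' := h2
        have hqp : q ≠ p := (ne_of_lt hpq).symm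
        have hqq' : q ≠ q' := ne_of_lt hpq'
        rw [wrd_symm e ψ s t (fun h => (ne_of_lt hpq) (e.injective h))]
        exact three_le_hammingDist q p q' hqp hqq' hpq''
          (wrd_diff_shared e ψ hψinj s t hqp hqq' hpq'')
          (wrd_diff_out e ψ hψ0 s t s t hqp (Or.inr rfl) hqp.symm hpq'')
          ((wrd_diff_out e ψ hψ0 s t s t hqq' (Or.inr rfl) hqq'.symm hpq''.symm).symm)
      · by_cases h4 : q = q'
        · subst h4
          have hqp : q ≠ p := (ne_of_lt hpq).symm
          have hqp' : q ≠ p' := (ne_of_lt hpq').symm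
          have hpp' : p ≠ p' := h1
          rw [wrd_symm e ψ s t (fun h => (ne_of_lt hpq) (e.injective h)),
            wrd_symm e ψ s t (fun h => (ne_of_lt hpq') (e.injective h))]
          exact three_le_hammingDist q p p' hqp hqp' hpp'
            (wrd_diff_shared e ψ hψinj s t hqp hqp' hpp')
            (wrd_diff_out e ψ hψ0 s t s t hqp (Or.inr rfl) hqp.symm hpp')
            ((wrd_diff_out e ψ hψ0 s t s t hqp' (Or.inr rfl) hqp'.symm hpp'.symm).symm)
        · have hq'p : q' ≠ p := fun h => h2 h.symm
          have hq'q : q' ≠ q := fun h => h4 h.symm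
          have hp'p : p' ≠ p := fun h => h1 h.symm
          have hp'q : p' ≠ q := fun h => h3 h.symm
          exact three_le_hammingDist p p' q' h1 h2 (ne_of_lt hpq')
            (wrd_diff_out e ψ hψ0 s t s t (ne_of_lt hpq) (Or.inl rfl) h1 h2)
            ((wrd_diff_out e ψ hψ0 s t s t (ne_of_lt hpq') (Or.inl rfl) hp'p hp'q).symm)
            ((wrd_diff_out e ψ hψ0 s t s t (ne_of_lt hpq') (Or.inr rfl) hq'p hq'q).symm)


end Words

lemma pairs_card (n : ℕ) :
    ((Finset.univ : Finset (Fin n × Fin n)).filter fun pq => pq.1 < pq.2).card = n.choose 2 := by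
  rw [Finset.card_eq_sum_card_fiberwise (f := Prod.snd) (t := Finset.univ)
    (fun x _ => mem_univ _)]
  have h : ∀ q : Fin n,
      (((Finset.univ : Finset (Fin n × Fin n)).filter fun pq => pq.1 < pq.2).filter
        fun pq => pq.snd = q).card = (q : ℕ) := by
    intro q
    rw [← Fin.card_Iio q]
    apply Finset.card_bij (fun pq _ => pq.1)
    · intro pq hpq
      simp only [mem_filter, mem_univ, true_and] at hpq
      exact Finset.mem_Iio.2 (hpq.2 ▸ hpq.1)
    · intro pq hpq pq' hpq'
      simp only [mem_filter, mem_univ, true_and] at hpq hpq'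
      intro h
      exact Prod.ext h (hpq.2.trans hpq'.2.symm)
    · intro b hb
      exact ⟨(b, q), by simp [Finset.mem_Iio.1 hb], rfl⟩
  rw [Finset.sum_congr rfl (fun q _ => h q), Fin.sum_univ_eq_sum_range (fun i => i) n,
    Finset.sum_range_id, Nat.choose_two_right]

/-- The construction of an `OF(g+1,g)` from a field of cardinality `g`. -/
lemma isOF_of_field {K : Type} [Field K] [Fintype K] [DecidableEq K] {g : ℕ}
    (hK : Fintype.card K = g) : IsOF (g + 1) g := by
  classical
  -- positions
  have he : Fintype.card (Fin (g + 1)) = Fintype.card (Option K) := by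
    simp [hK]
  let e : Fin (g + 1) ≃ Option K := Fintype.equivOfCardEq he
  -- values
  have hsub : Fintype.card {v : Fin (g + 1) // v ≠ 0} = g := by
    rw [Fintype.card_subtype_compl, Fintype.card_subtype_eq, Fintype.card_fin]
    omega
  have hφ : Fintype.card K = Fintype.card {v : Fin (g + 1) // v ≠ 0} := by
    rw [hsub, hK]
  let φ : K ≃ {v : Fin (g + 1) // v ≠ 0} := Fintype.equivOfCardEq hφ
  let ψ : K → Fin (g + 1) := fun k => (φ k : Fin (g + 1))
  have hψ0 : ∀ k, ψ k ≠ 0 := fun k => (φ k).2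
  have hψinj : Function.Injective ψ := fun a b h => φ.injective (Subtype.ext h)
  have hψsurj : ∀ v : Fin (g + 1), v ≠ 0 → ∃ k, ψ k = v := fun v hv =>
    ⟨φ.symm ⟨v, hv⟩, by simp [ψ]⟩
  -- classes
  have hι : Fintype.card (Fin (g * (g + 1 - 1))) = Fintype.card (K × K) := by
    simp [hK]
  let ι : Fin (g * (g + 1 - 1)) ≃ K × K := Fintype.equivOfCardEq hι
  -- key injectivity property
  have key_inj : ∀ s t s' t' (p q p' q' : Fin (g + 1)), p < q → p' < q' →
      wrd e ψ s t (e p) (e q) = wrd e ψ s' t' (e p') (e q') →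
      p = p' ∧ q = q' ∧ s = s' ∧ t = t' := by
    intro s t s' t' p q p' q' h h' heq
    have hsup : ({p, q} : Finset (Fin (g + 1))) = {p', q'} := by
      rw [← wrd_support e ψ hψ0 s t (ne_of_lt h), heq,
        wrd_support e ψ hψ0 s' t' (ne_of_lt h')]
    have h1 : p = p' ∨ p = q' := by
      have := (Finset.ext_iff.mp hsup p).1 (by simp)
      simpa using this
    have h2 : q = p' ∨ q = q' := by
      have := (Finset.ext_iff.mp hsup q).1 (by simp)
      simpa using this
    have hv1 : (p : ℕ) = p' ∨ (p : ℕ) = q' := h1.imp (congrArg Fin.val) (congrArg Fin.val)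
    have hv2 : (q : ℕ) = p' ∨ (q : ℕ) = q' := h2.imp (congrArg Fin.val) (congrArg Fin.val)
    have hl : (p : ℕ) < q := h
    have hl' : (p' : ℕ) < q' := h'
    have hp : p = p' := Fin.ext (by omega)
    have hq : q = q' := Fin.ext (by omega)
    subst hp; subst hq
    have hvp := congrFun heq p
    rw [wrd_self, wrd_self] at hvp
    have hvq := congrFun heq q
    rw [wrd_other e ψ s t (ne_of_lt h), wrd_other e ψ s' t' (ne_of_lt h)] at hvq
    have hij : (e p : Option K) ≠ e q := fun hh => (ne_of_lt h) (e.injective hh)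
    obtain ⟨hs, ht⟩ := Vfun_pair_inj hij (hψinj hvp) (hψinj hvq)
    exact ⟨rfl, rfl, hs, ht⟩
  -- every weight-2 word is of the form `wrd`
  have hcover : ∀ x : Fin (g + 1) → Fin (g + 1), ∀ a b : Fin (g + 1), a < b →
      (Finset.univ.filter fun i => ((x i : ℕ) ≠ 0)) = {a, b} →
      ∃ s t : K, x = wrd e ψ s t (e a) (e b) := by
    intro x a b hab hfil
    have hxa : x a ≠ 0 := by
      have ha : a ∈ Finset.univ.filter fun i => ((x i : ℕ) ≠ 0) := by
        rw [hfil]; simp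
      have := (Finset.mem_filter.1 ha).2
      exact fun h => this (by rw [h]; rfl)
    have hxb : x b ≠ 0 := by
      have hb : b ∈ Finset.univ.filter fun i => ((x i : ℕ) ≠ 0) := by
        rw [hfil]; simp
      have := (Finset.mem_filter.1 hb).2
      exact fun h => this (by rw [h]; rfl)
    have hzero : ∀ r, r ≠ a → r ≠ b → x r = 0 := by
      intro r hra hrb
      by_contra hr
      have hrm : r ∈ ({a, b} : Finset (Fin (g + 1))) := by
        rw [← hfil]
        exact Finset.mem_filter.2 ⟨Finset.mem_univ _, fun h => hr (Fin.ext (by simp [h]))⟩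
      simp only [Finset.mem_insert, Finset.mem_singleton] at hrm
      tauto
    obtain ⟨k1, hk1⟩ := hψsurj _ hxa
    obtain ⟨k2, hk2⟩ := hψsurj _ hxb
    have hij : (e a : Option K) ≠ e b := fun h => (ne_of_lt hab) (e.injective h)
    obtain ⟨s, t, h1, h2⟩ := Vfun_pair_surj hij k1 k2
    refine ⟨s, t, ?_⟩
    funext r
    by_cases hra : r = a
    · subst hra; rw [wrd_self, h1, hk1]
    · by_cases hrb : r = b
      · subst hrb; rw [wrd_other e ψ s t (ne_of_lt hab), h2, hk2]
      · rw [wrd_zero e ψ s t hra hrb, hzero r hra hrb]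
  refine ⟨fun c => (Finset.univ.filter fun pq : Fin (g + 1) × Fin (g + 1) =>
    pq.1 < pq.2).image fun pq => wrd e ψ (ι c).1 (ι c).2 (e pq.1) (e pq.2), ?_, ?_, ?_, ?_⟩
  · -- disjointness
    intro c c' hcc
    rw [Finset.disjoint_left]
    intro x hx hx'
    obtain ⟨pq, hpq, rfl⟩ := Finset.mem_image.1 hx
    obtain ⟨pq', hpq', heq⟩ := Finset.mem_image.1 hx'
    obtain ⟨_, _, hs, ht⟩ := key_inj _ _ _ _ _ _ _ _
      (Finset.mem_filter.1 hpq').2 (Finset.mem_filter.1 hpq).2 heq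
    exact hcc (ι.injective (Prod.ext hs ht)).symm
  · -- the union is all of `H(g+1)`
    apply Finset.ext
    intro x
    constructor
    · intro hx
      obtain ⟨c, _, hx⟩ := Finset.mem_biUnion.1 hx
      obtain ⟨pq, hpq, rfl⟩ := Finset.mem_image.1 hx
      exact Finset.mem_filter.2 ⟨Finset.mem_univ _,
        wrd_weight e ψ hψ0 _ _ (ne_of_lt (Finset.mem_filter.1 hpq).2)⟩
    · intro hx
      have hw : wordWeight x = 2 := (Finset.mem_filter.1 hx).2
      unfold wordWeight at hw
      obtain ⟨a, b, hab, hfil⟩ := Finset.card_eq_two.1 hw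
      have hmain : ∃ a b : Fin (g + 1), a < b ∧ ∃ s t : K, x = wrd e ψ s t (e a) (e b) := by
        rcases lt_or_gt_of_ne hab with hl | hl
        · obtain ⟨s, t, hst⟩ := hcover x a b hl hfil
          exact ⟨a, b, hl, s, t, hst⟩
        · rw [Finset.pair_comm] at hfil
          obtain ⟨s, t, hst⟩ := hcover x b a hl hfil
          exact ⟨b, a, hl, s, t, hst⟩
      obtain ⟨a, b, hl, s, t, rfl⟩ := hmain
      refine Finset.mem_biUnion.2 ⟨ι.symm (s, t), Finset.mem_univ _, ?_⟩
      refine Finset.mem_image.2 ⟨(a, b), Finset.mem_filter.2 ⟨Finset.mem_univ _, hl⟩, ?_⟩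
      rw [Equiv.apply_symm_apply]
  · -- cardinality of each part
    intro c
    rw [Finset.card_image_of_injOn, pairs_card]
    · rw [Nat.choose_two_right]
      simp only [Nat.add_sub_cancel]
      rw [Nat.mul_comm]
    · intro pq h1 pq' h2 heq
      have hk := key_inj _ _ _ _ _ _ _ _
        (Finset.mem_filter.1 h1).2 (Finset.mem_filter.1 h2).2 heq
      exact Prod.ext hk.1 hk.2.1
  · -- minimum distance 3 within each part
    intro c x hx y hy hxy
    obtain ⟨pq, hpq, rfl⟩ := Finset.mem_image.1 hx
    obtain ⟨pq', hpq', rfl⟩ := Finset.mem_image.1 hy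
    apply wrd_dist e ψ hψ0 hψinj _ _ (Finset.mem_filter.1 hpq).2 (Finset.mem_filter.1 hpq').2
    rintro ⟨h1, h2⟩
    exact hxy (by rw [h1, h2])


/-- For every odd prime power `g`, an `OF(g+1, g)` exists. -/
theorem exists_OF_succ_of_odd_prime_pow (g : ℕ) (hgo : Odd g) (hgpp : IsPrimePow g) :
    IsOF (g + 1) g := by
  obtain ⟨p, k, hp, hk, rfl⟩ := hgpp
  haveI := Fact.mk hp.nat_prime
  haveI : Fintype (GaloisField p k) := Fintype.ofFinite _
  haveI : DecidableEq (GaloisField p k) := Classical.decEq _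
  have hcard : Fintype.card (GaloisField p k) = p ^ k := by
    rw [← Nat.card_eq_fintype_card]
    exact GaloisField.card p k hk.ne'
  exact isOF_of_field hcard
end

section
/- (Product construction.) Let u, v and g be positive integers such that g·u and g·v are even, u > g and v > g. If there exist an OF(u,g) and an OF(v,g), then there exists an OF(u·v, g). -/
/-!
Index the `u * v` coordinates by pairs `(p, c)` with `p : Fin u` (viewed in `ℤ_u`) and
`c : Fin v`. The support of a weight-two word either lies in one column `c`, and the word is a
copy of a word of `H(u)` in that column, or meets two columns `c₁ < c₂` in rows `a` and `a + s`,
and the word is a copy of a word of `H(v)` along the skew line of slope `s` through row `a`.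
The new classes are the column copies of one class of the OF(u, g) (all columns at once), and,
for each class of the OF(v, g) and each slope `s`, its skew copies of slope `s` (all starting
rows at once). Inside a class, copies in different columns or on parallel skew lines have
disjoint supports, and two copies on the same line are at least as far apart as the originals.
This gives `g(u - 1) + g(v - 1)·u = g(uv - 1)` classes of size `v·(gu/2) = u·(gv/2) = g·uv/2`.
-/

namespace OFProduct

open Finset Function

section Words

variable {ι F : Type*} [Fintype ι] [Zero F] [DecidableEq F]

def wordSupport (x : ι → F) : Finset ι := {i | x i ≠ 0}

@[simp] lemma mem_wordSupport {x : ι → F} {i : ι} : i ∈ wordSupport x ↔ x i ≠ 0 := by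
  simp [wordSupport]

lemma card_wordSupport (x : ι → F) : #(wordSupport x) = hammingNorm x := rfl

lemma exists_lt_wordSupport_eq_pair [LinearOrder ι] {y : ι → F} (hy : hammingNorm y = 2) :
    ∃ b₁ b₂, b₁ < b₂ ∧ wordSupport y = {b₁, b₂} := by
  obtain ⟨b, b', hne, hb⟩ := card_eq_two.mp hy
  rcases hne.lt_or_gt with h | h
  · exact ⟨b, b', h, hb⟩
  · exact ⟨b', b, h, hb.trans (pair_comm b b')⟩

lemma hammingDist_eq_add_of_disjoint [DecidableEq ι] {x y : ι → F}
    (h : Disjoint (wordSupport x) (wordSupport y)) :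
    hammingDist x y = hammingNorm x + hammingNorm y := by
  rw [← card_wordSupport, ← card_wordSupport, ← card_union_of_disjoint h, hammingDist]
  congr 1
  ext i
  have := @disjoint_left.mp h i
  simp only [mem_filter, mem_univ, true_and, mem_union, mem_wordSupport] at this ⊢
  constructor
  · intro hi
    by_contra! h0
    exact hi (h0.1.trans h0.2.symm)
  · rintro (hx | hy) hxy
    · exact this hx (hxy ▸ hx)
    · exact this (hxy ▸ hy) hy

omit [Zero F] in
lemma hammingDist_comp_equiv {ι' : Type*} [Fintype ι'] (e : ι' ≃ ι) (x y : ι → F) :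
    hammingDist (x ∘ e) (y ∘ e) = hammingDist x y := by
  simp only [hammingDist]
  exact card_equiv e (by simp)

lemma hammingNorm_comp_equiv {ι' : Type*} [Fintype ι'] (e : ι' ≃ ι) (x : ι → F) :
    hammingNorm (x ∘ e) = hammingNorm x := by
  simpa only [Pi.zero_comp, hammingDist_zero_right] using hammingDist_comp_equiv e x 0

end Words

section Extend

variable {ι κ F : Type*} [DecidableEq ι] [Zero F] {f f' : κ → ι} {π : ι → κ}

lemma extend_apply_of_leftInverse (h : LeftInverse π f) (x : κ → F) (k : ι) :
    extend f x 0 k = if f (π k) = k then x (π k) else 0 := by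
  split_ifs with hk
  · rw [← hk, h.injective.extend_apply, h]
  · exact extend_apply' _ _ _ fun ⟨c, hc⟩ => hk (by rw [← hc, h])

lemma extend_eq_extend (h : LeftInverse π f) (h' : LeftInverse π f') {x y : κ → F}
    (he : extend f x 0 = extend f' y 0) : x = y ∧ ∀ c, x c ≠ 0 → f c = f' c := by
  have hx c : x c = if f' c = f c then y c else 0 := by
    simpa [extend_apply_of_leftInverse h, extend_apply_of_leftInverse h', h c] using
      congrFun he (f c)
  have hy c : y c = if f c = f' c then x c else 0 := by
    simpa [extend_apply_of_leftInverse h, extend_apply_of_leftInverse h', h' c] using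
      (congrFun he (f' c)).symm
  refine ⟨funext fun c => ?_, fun c hc => ?_⟩
  · by_cases hfc : f c = f' c
    · simp [hx c, hfc]
    · simp [hx c, hy c, hfc, Ne.symm hfc]
  · by_contra hfc
    simp [hx c, Ne.symm hfc] at hc

variable [Fintype ι] [Fintype κ] [DecidableEq F]

lemma wordSupport_extend (hf : Injective f) (x : κ → F) :
    wordSupport (extend f x 0) = (wordSupport x).map ⟨f, hf⟩ := by
  ext k
  by_cases hk : ∃ c, f c = k
  · obtain ⟨c, rfl⟩ := hk
    simp [hf.extend_apply]
  · simp only [mem_wordSupport, extend_apply' _ _ _ hk, Pi.zero_apply, ne_eq,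
      not_true_eq_false, false_iff, mem_map, Embedding.coeFn_mk, not_exists, not_and]
    exact fun c _ hc => hk ⟨c, hc⟩

lemma hammingNorm_extend (hf : Injective f) (x : κ → F) :
    hammingNorm (extend f x 0) = hammingNorm x := by
  rw [← card_wordSupport, wordSupport_extend hf, card_map, card_wordSupport]

lemma extend_eq_of_wordSupport_eq_map (hf : Injective f) {x : κ → F} {w : ι → F}
    (hw : wordSupport w = (wordSupport x).map ⟨f, hf⟩)
    (hwx : ∀ c ∈ wordSupport x, w (f c) = x c) : extend f x 0 = w := by
  funext k
  by_cases hk : k ∈ wordSupport w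
  · rw [hw, mem_map] at hk
    obtain ⟨c, hc, rfl⟩ := hk
    simp [hf.extend_apply, hwx c hc]
  · have hk' : k ∉ wordSupport (extend f x 0) := by rwa [wordSupport_extend hf, ← hw]
    rw [mem_wordSupport, not_not] at hk hk'
    rw [hk, hk']

lemma disjoint_wordSupport_extend (hf : Injective f) (hf' : Injective f')
    (h : ∀ c c', f c ≠ f' c') (x y : κ → F) :
    Disjoint (wordSupport (extend f x 0)) (wordSupport (extend f' y 0)) := by
  simp only [wordSupport_extend hf, wordSupport_extend hf', disjoint_left, mem_map,
    Embedding.coeFn_mk]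
  rintro _ ⟨c, -, rfl⟩ ⟨c', -, hc'⟩
  exact h c c' hc'.symm

lemma hammingDist_le_hammingDist_extend (h : LeftInverse π f) (h' : LeftInverse π f')
    (x y : κ → F) : hammingDist x y ≤ hammingDist (extend f x 0) (extend f' y 0) := by
  -- send a coordinate where `x` and `y` differ to the copy of it carrying a nonzero entry
  refine card_le_card_of_injOn (fun c => if x c ≠ 0 then f c else f' c) ?_ ?_
  · intro c hc
    simp only [coe_filter, mem_univ, true_and, Set.mem_ofPred_eq] at hc ⊢
    rw [extend_apply_of_leftInverse h, extend_apply_of_leftInverse h']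
    by_cases hxc : x c = 0
    · simp only [hxc, ne_eq, not_true_eq_false, if_false, h' c, if_true, ite_self] at hc ⊢
      exact hc
    · simp only [hxc, ne_eq, not_false_eq_true, if_true, h c]
      split_ifs <;> tauto
  · have hπ c : π (if x c ≠ 0 then f c else f' c) = c := by split_ifs <;> simp [h c, h' c]
    intro c _ c' _ hcc'
    rw [← hπ c, ← hπ c']
    exact congrArg π hcc'

end Extend

section Partition

variable {ι κ F : Type*} [Fintype ι] [Zero F] [DecidableEq F]

structure IsDist3Partition (P : κ → Finset (ι → F)) (s : ℕ) : Prop where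
  pairwise_disjoint : Pairwise (Disjoint on P)
  exists_mem_iff : ∀ w, (∃ i, w ∈ P i) ↔ hammingNorm w = 2
  card_eq : ∀ i, #(P i) = s
  pairwise_dist : ∀ i, (P i : Set (ι → F)).Pairwise fun x y => 3 ≤ hammingDist x y

lemma IsDist3Partition.hammingNorm_eq {P : κ → Finset (ι → F)} {s : ℕ}
    (h : IsDist3Partition P s) {i : κ} {x : ι → F} (hx : x ∈ P i) : hammingNorm x = 2 :=
  (h.exists_mem_iff x).mp ⟨i, hx⟩

lemma IsDist3Partition.exists_of_equiv {ι' κ' : Type*} [Fintype ι'] {P : κ → Finset (ι → F)}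
    {s : ℕ} (h : IsDist3Partition P s) (eι : ι ≃ ι') (eκ : κ ≃ κ') :
    ∃ P' : κ' → Finset (ι' → F), IsDist3Partition P' s := by
  set E : (ι → F) ≃ (ι' → F) := eι.arrowCongr (Equiv.refl F)
  have hE x : E x = x ∘ eι.symm := rfl
  refine ⟨fun j => (P (eκ.symm j)).map E.toEmbedding, ⟨?_, ?_, ?_, ?_⟩⟩
  · intro j j' hjj'
    exact (disjoint_map _).mpr (h.pairwise_disjoint (eκ.symm.injective.ne hjj'))
  · intro w
    rw [← hammingNorm_comp_equiv eι w, ← h.exists_mem_iff]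
    simp only [mem_map_equiv]
    exact (eκ.exists_congr_left (p := fun i => w ∘ eι ∈ P i)).symm
  · simp [h.card_eq]
  · intro j
    simp only [coe_map, Set.Pairwise, Set.mem_image, mem_coe]
    rintro _ ⟨x, hx, rfl⟩ _ ⟨y, hy, rfl⟩ hne
    rw [Equiv.coe_toEmbedding, hE, hE, hammingDist_comp_equiv]
    exact h.pairwise_dist _ hx hy (fun hxy => hne (by rw [hxy]))

end Partition

lemma wordWeight_eq_hammingNorm {m g : ℕ} (x : Fin m → Fin (g + 1)) :
    wordWeight x = hammingNorm x := by
  simp only [wordWeight, hammingNorm, Fin.val_ne_zero_iff]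

lemma hasDist3Partition_iff {m g k s : ℕ} :
    HasDist3Partition m g k s ↔
      ∃ P : Fin k → Finset (Fin m → Fin (g + 1)), IsDist3Partition P s := by
  simp only [HasDist3Partition, Finset.ext_iff, mem_biUnion, mem_univ, true_and, weightTwoWords,
    mem_filter, wordWeight_eq_hammingNorm]
  exact exists_congr fun P =>
    ⟨fun ⟨h₁, h₂, h₃, h₄⟩ => ⟨h₁, h₂, h₃, h₄⟩, fun ⟨h₁, h₂, h₃, h₄⟩ => ⟨h₁, h₂, h₃, h₄⟩⟩

lemma leftInverse_fst_prodMk_right {α β : Type*} (b : β) :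
    LeftInverse Prod.fst fun p : α => (p, b) :=
  fun _ => rfl

lemma leftInverse_snd_graph {α β : Type*} (σ : β → α) :
    LeftInverse Prod.snd fun c => (σ c, c) :=
  fun _ => rfl

section Column

variable {α β F : Type*} [Zero F]

noncomputable def columnCopy (x : α → F) (b : β) : α × β → F :=
  extend (fun p => (p, b)) x 0

variable [DecidableEq α] [DecidableEq β]

lemma columnCopy_injective {x x' : α → F} {b b' : β}
    (h : columnCopy x b = columnCopy x' b') : x = x' :=
  (extend_eq_extend (leftInverse_fst_prodMk_right b) (leftInverse_fst_prodMk_right b') h).1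

lemma columnCopy_inj {x x' : α → F} {b b' : β} (hx : x ≠ 0)
    (h : columnCopy x b = columnCopy x' b') : x = x' ∧ b = b' := by
  obtain ⟨hxx', hbb'⟩ :=
    extend_eq_extend (leftInverse_fst_prodMk_right b) (leftInverse_fst_prodMk_right b') h
  obtain ⟨p, hp⟩ := Function.ne_iff.mp hx
  exact ⟨hxx', (Prod.ext_iff.mp (hbb' p hp)).2⟩

variable [Fintype α] [Fintype β] [DecidableEq F]

lemma hammingNorm_columnCopy (x : α → F) (b : β) :
    hammingNorm (columnCopy x b) = hammingNorm x :=
  hammingNorm_extend (leftInverse_fst_prodMk_right b).injective x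

lemma disjoint_wordSupport_columnCopy {b b' : β} (hb : b ≠ b') (x x' : α → F) :
    Disjoint (wordSupport (columnCopy x b)) (wordSupport (columnCopy x' b')) :=
  disjoint_wordSupport_extend (leftInverse_fst_prodMk_right b).injective
    (leftInverse_fst_prodMk_right b').injective (fun _ _ h => hb (Prod.ext_iff.mp h).2) x x'

lemma exists_columnCopy_eq {w : α × β → F} {p₁ p₂ : α} {b : β} (hp : p₁ ≠ p₂)
    (hw : wordSupport w = {(p₁, b), (p₂, b)}) :
    ∃ x, hammingNorm x = 2 ∧ columnCopy x b = w := by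
  set x : α → F := fun p => w (p, b)
  have hx : wordSupport x = {p₁, p₂} := by
    ext p
    simpa [x] using congrArg (((p, b) : α × β) ∈ ·) hw
  refine ⟨x, by rw [← card_wordSupport, hx, card_pair hp], ?_⟩
  refine extend_eq_of_wordSupport_eq_map (leftInverse_fst_prodMk_right b).injective ?_
    fun _ _ => rfl
  rw [hw, hx]
  simp

noncomputable def columnClass (P : Finset (α → F)) : Finset (α × β → F) :=
  (P ×ˢ univ).image fun z => columnCopy z.1 z.2

omit [DecidableEq α] [DecidableEq β] in
lemma mem_columnClass {P : Finset (α → F)} {w : α × β → F} :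
    w ∈ columnClass P ↔ ∃ x ∈ P, ∃ b, columnCopy x b = w := by
  simp [columnClass]

lemma card_columnClass {P : Finset (α → F)} (hP : ∀ x ∈ P, x ≠ 0) :
    #(columnClass (β := β) P) = #P * Fintype.card β := by
  rw [columnClass, card_image_of_injOn, card_product, card_univ]
  rintro ⟨x, b⟩ hx ⟨x', b'⟩ - h
  obtain ⟨rfl, rfl⟩ := columnCopy_inj (hP x (mem_product.mp hx).1) h
  rfl

lemma disjoint_columnClass {P P' : Finset (α → F)} (h : Disjoint P P') :
    Disjoint (columnClass (β := β) P) (columnClass P') := by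
  simp only [disjoint_left, mem_columnClass]
  rintro _ ⟨x, hx, b, rfl⟩ ⟨x', hx', b', h'⟩
  exact disjoint_left.mp h hx (columnCopy_injective h' ▸ hx')

lemma pairwise_columnClass {P : Finset (α → F)} (hP : ∀ x ∈ P, hammingNorm x = 2)
    (hd : (P : Set (α → F)).Pairwise fun x x' => 3 ≤ hammingDist x x') :
    (columnClass (β := β) P : Set (α × β → F)).Pairwise fun w w' => 3 ≤ hammingDist w w' := by
  simp only [Set.Pairwise, mem_coe, mem_columnClass]
  rintro _ ⟨x, hx, b, rfl⟩ _ ⟨x', hx', b', rfl⟩ hne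
  by_cases hb : b = b'
  · subst hb
    have hxx' : x ≠ x' := by rintro rfl; exact hne rfl
    exact (hd hx hx' hxx').trans (hammingDist_le_hammingDist_extend
      (leftInverse_fst_prodMk_right b) (leftInverse_fst_prodMk_right b) x x')
  · rw [hammingDist_eq_add_of_disjoint (disjoint_wordSupport_columnCopy hb x x'),
      hammingNorm_columnCopy, hammingNorm_columnCopy, hP x hx, hP x' hx']
    norm_num

end Column

section Skew

variable {α β F : Type*} [AddGroup α] [Fintype β] [LinearOrder β] [Zero F] [DecidableEq F]

def skewRow (y : β → F) (a s : α) (c : β) : α :=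
  a + if ∃ c' ∈ wordSupport y, c' < c then s else 0

/-- If `wordSupport y = {b₁, b₂}` with `b₁ < b₂`, then `skewCopy y a s` carries `y b₁` at
`(a, b₁)` and `y b₂` at `(a + s, b₂)`. -/
noncomputable def skewCopy (y : β → F) (a s : α) : α × β → F :=
  extend (fun c => (skewRow y a s c, c)) y 0

lemma skewRow_of_wordSupport_eq_pair {y : β → F} {b₁ b₂ : β} (h : b₁ < b₂)
    (hy : wordSupport y = {b₁, b₂}) (a s : α) :
    skewRow y a s b₁ = a ∧ skewRow y a s b₂ = a + s := by
  simp only [skewRow, hy, mem_insert, mem_singleton, exists_eq_or_imp, exists_eq_left,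
    lt_irrefl, h, h.not_gt, or_false, if_true, if_false, add_zero, and_self]

variable [DecidableEq α]

lemma skewCopy_inj {y y' : β → F} {a a' s s' : α} (hy : hammingNorm y = 2)
    (h : skewCopy y a s = skewCopy y' a' s') : y = y' ∧ a = a' ∧ s = s' := by
  obtain ⟨rfl, hrow⟩ := extend_eq_extend (leftInverse_snd_graph _) (leftInverse_snd_graph _) h
  obtain ⟨b₁, b₂, h₁₂, hb⟩ := exists_lt_wordSupport_eq_pair hy
  obtain ⟨hb₁, hb₂⟩ := skewRow_of_wordSupport_eq_pair h₁₂ hb a s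
  obtain ⟨hb₁', hb₂'⟩ := skewRow_of_wordSupport_eq_pair h₁₂ hb a' s'
  have e₁ := congrArg Prod.fst (hrow b₁ (mem_wordSupport.mp (by simp [hb])))
  have e₂ := congrArg Prod.fst (hrow b₂ (mem_wordSupport.mp (by simp [hb])))
  simp only [hb₁, hb₁', hb₂, hb₂'] at e₁ e₂
  subst e₁
  exact ⟨rfl, rfl, add_left_cancel e₂⟩

lemma columnCopy_ne_skewCopy {y : β → F} (hy : hammingNorm y = 2) (x : α → F) (b : β)
    (a s : α) : columnCopy x b ≠ skewCopy y a s := by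
  intro h
  have hcol c (hc : c ∈ wordSupport y) : c = b := by
    have := congrFun h (skewRow y a s c, c)
    rw [skewCopy, (leftInverse_snd_graph _).injective.extend_apply, columnCopy,
      extend_apply_of_leftInverse (leftInverse_fst_prodMk_right b)] at this
    by_contra hcb
    simp only [Prod.mk.injEq, Ne.symm hcb, and_false, if_false] at this
    exact mem_wordSupport.mp hc this.symm
  obtain ⟨b₁, b₂, h₁₂, hb⟩ := exists_lt_wordSupport_eq_pair hy
  exact h₁₂.ne ((hcol b₁ (by simp [hb])).trans (hcol b₂ (by simp [hb])).symm)

variable [Fintype α]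

lemma hammingNorm_skewCopy (y : β → F) (a s : α) :
    hammingNorm (skewCopy y a s) = hammingNorm y :=
  hammingNorm_extend (leftInverse_snd_graph _).injective y

lemma disjoint_wordSupport_skewCopy {a a' : α} (ha : a ≠ a') (y : β → F) (s : α) :
    Disjoint (wordSupport (skewCopy y a s)) (wordSupport (skewCopy y a' s)) := by
  refine disjoint_wordSupport_extend (leftInverse_snd_graph _).injective
    (leftInverse_snd_graph _).injective (fun c c' h => ?_) y y
  obtain ⟨h₁, rfl⟩ := Prod.ext_iff.mp h
  exact ha (add_right_cancel h₁)

lemma exists_skewCopy_eq {w : α × β → F} {p₁ p₂ : α} {c₁ c₂ : β} (hc : c₁ < c₂)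
    (hw : wordSupport w = {(p₁, c₁), (p₂, c₂)}) :
    ∃ y a s, hammingNorm y = 2 ∧ skewCopy y a s = w := by
  have hw' k : w k ≠ 0 ↔ k = (p₁, c₁) ∨ k = (p₂, c₂) := by simpa using Finset.ext_iff.mp hw k
  set y : β → F := fun c => w (if c = c₂ then p₂ else p₁, c)
  have hy : wordSupport y = {c₁, c₂} := by
    ext c
    by_cases h₂ : c = c₂ <;> simp [y, hw', h₂]
  obtain ⟨hr₁, hr₂⟩ := skewRow_of_wordSupport_eq_pair hc hy p₁ (-p₁ + p₂)
  rw [add_neg_cancel_left] at hr₂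
  refine ⟨y, p₁, -p₁ + p₂, by rw [← card_wordSupport, hy, card_pair hc.ne], ?_⟩
  refine extend_eq_of_wordSupport_eq_map (leftInverse_snd_graph _).injective ?_ ?_
  · rw [hw, hy]
    simp [hr₁, hr₂]
  · intro c hc'
    rw [hy, mem_insert, mem_singleton] at hc'
    rcases hc' with rfl | rfl
    · simp [y, hr₁, hc.ne]
    · simp [y, hr₂]

noncomputable def skewClass (Q : Finset (β → F)) (s : α) : Finset (α × β → F) :=
  (Q ×ˢ univ).image fun z => skewCopy z.1 z.2 s

omit [DecidableEq α] in
lemma mem_skewClass {Q : Finset (β → F)} {s : α} {w : α × β → F} :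
    w ∈ skewClass Q s ↔ ∃ y ∈ Q, ∃ a, skewCopy y a s = w := by
  simp [skewClass]

lemma card_skewClass {Q : Finset (β → F)} (hQ : ∀ y ∈ Q, hammingNorm y = 2) (s : α) :
    #(skewClass Q s) = #Q * Fintype.card α := by
  rw [skewClass, card_image_of_injOn, card_product, card_univ]
  rintro ⟨y, a⟩ hy ⟨y', a'⟩ - h
  obtain ⟨rfl, rfl, -⟩ := skewCopy_inj (hQ y (mem_product.mp hy).1) h
  rfl

lemma disjoint_skewClass {Q Q' : Finset (β → F)} (hQ : ∀ y ∈ Q, hammingNorm y = 2)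
    {s s' : α} (h : Disjoint Q Q' ∨ s ≠ s') : Disjoint (skewClass Q s) (skewClass Q' s') := by
  simp only [disjoint_left, mem_skewClass]
  rintro _ ⟨y, hy, a, rfl⟩ ⟨y', hy', a', h'⟩
  obtain ⟨rfl, -, rfl⟩ := skewCopy_inj (hQ y hy) h'.symm
  exact h.elim (fun hd => disjoint_left.mp hd hy hy') (· rfl)

lemma pairwise_skewClass {Q : Finset (β → F)} (hQ : ∀ y ∈ Q, hammingNorm y = 2)
    (hd : (Q : Set (β → F)).Pairwise fun y y' => 3 ≤ hammingDist y y') (s : α) :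
    (skewClass Q s : Set (α × β → F)).Pairwise fun w w' => 3 ≤ hammingDist w w' := by
  simp only [Set.Pairwise, mem_coe, mem_skewClass]
  rintro _ ⟨y, hy, a, rfl⟩ _ ⟨y', hy', a', rfl⟩ hne
  by_cases hyy' : y = y'
  · subst hyy'
    have haa' : a ≠ a' := by rintro rfl; exact hne rfl
    rw [hammingDist_eq_add_of_disjoint (disjoint_wordSupport_skewCopy haa' y s),
      hammingNorm_skewCopy, hammingNorm_skewCopy, hQ y hy]
    norm_num
  · exact (hd hy hy' hyy').trans (hammingDist_le_hammingDist_extend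
      (leftInverse_snd_graph _) (leftInverse_snd_graph _) y y')

end Skew

section Product

variable {α β κ ν F : Type*} [AddGroup α] [Fintype α] [DecidableEq α] [Fintype β]
  [LinearOrder β] [Zero F] [DecidableEq F]

lemma disjoint_columnClass_skewClass (P : Finset (α → F)) {Q : Finset (β → F)}
    (hQ : ∀ y ∈ Q, hammingNorm y = 2) (s : α) : Disjoint (columnClass P) (skewClass Q s) := by
  simp only [disjoint_left, mem_columnClass, mem_skewClass]
  rintro _ ⟨x, -, b, rfl⟩ ⟨y, hy, a, h⟩
  exact columnCopy_ne_skewCopy (hQ y hy) x b a s h.symm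

lemma exists_columnCopy_or_skewCopy {w : α × β → F} (hw : hammingNorm w = 2) :
    (∃ x b, hammingNorm x = 2 ∧ columnCopy x b = w) ∨
      ∃ y a s, hammingNorm y = 2 ∧ skewCopy y a s = w := by
  obtain ⟨⟨p₁, c₁⟩, ⟨p₂, c₂⟩, hne, hk⟩ := card_eq_two.mp hw
  rcases lt_trichotomy c₁ c₂ with hc | rfl | hc
  · exact .inr (exists_skewCopy_eq hc hk)
  · obtain ⟨x, hx⟩ := exists_columnCopy_eq (fun h => hne (congrArg (·, c₁) h)) hk
    exact .inl ⟨x, c₁, hx⟩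
  · exact .inr (exists_skewCopy_eq hc (hk.trans (pair_comm _ _)))

noncomputable def productPartition (P : κ → Finset (α → F)) (Q : ν → Finset (β → F)) :
    κ ⊕ ν × α → Finset (α × β → F) :=
  Sum.elim (fun i => columnClass (P i)) fun js => skewClass (Q js.1) js.2

theorem IsDist3Partition.product {P : κ → Finset (α → F)} {Q : ν → Finset (β → F)} {s t : ℕ}
    (hP : IsDist3Partition P s) (hQ : IsDist3Partition Q t)
    (hst : s * Fintype.card β = t * Fintype.card α) :
    IsDist3Partition (productPartition P Q) (s * Fintype.card β) where
  pairwise_disjoint := by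
    rintro (i | ⟨j, a⟩) (i' | ⟨j', a'⟩) hne
    · exact disjoint_columnClass (hP.pairwise_disjoint fun h => hne (by rw [h]))
    · exact disjoint_columnClass_skewClass _ (fun _ => hQ.hammingNorm_eq) _
    · exact (disjoint_columnClass_skewClass _ (fun _ => hQ.hammingNorm_eq) _).symm
    · refine disjoint_skewClass (fun _ => hQ.hammingNorm_eq) ?_
      by_cases hj : j = j'
      · subst hj
        exact .inr fun h : a = a' => hne (by rw [h])
      · exact .inl (hQ.pairwise_disjoint hj)
  exists_mem_iff w := by
    constructor
    · rintro ⟨i | ⟨j, a⟩, hw⟩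
      · obtain ⟨x, hx, b, rfl⟩ := mem_columnClass.mp hw
        rw [hammingNorm_columnCopy, hP.hammingNorm_eq hx]
      · obtain ⟨y, hy, a, rfl⟩ := mem_skewClass.mp hw
        rw [hammingNorm_skewCopy, hQ.hammingNorm_eq hy]
    · intro hw
      rcases exists_columnCopy_or_skewCopy hw with ⟨x, b, hx, rfl⟩ | ⟨y, a, s, hy, rfl⟩
      · obtain ⟨i, hi⟩ := (hP.exists_mem_iff x).mpr hx
        exact ⟨.inl i, mem_columnClass.mpr ⟨x, hi, b, rfl⟩⟩
      · obtain ⟨j, hj⟩ := (hQ.exists_mem_iff y).mpr hy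
        exact ⟨.inr (j, s), mem_skewClass.mpr ⟨y, hj, a, rfl⟩⟩
  card_eq := by
    rintro (i | ⟨j, a⟩)
    · rw [productPartition, Sum.elim_inl, card_columnClass, hP.card_eq]
      intro x hx h0
      simpa [h0] using hP.hammingNorm_eq hx
    · rw [productPartition, Sum.elim_inr, card_skewClass (fun _ => hQ.hammingNorm_eq),
        hQ.card_eq, hst]
  pairwise_dist := by
    rintro (i | ⟨j, a⟩)
    · exact pairwise_columnClass (fun _ => hP.hammingNorm_eq) (hP.pairwise_dist i)
    · exact pairwise_skewClass (fun _ => hQ.hammingNorm_eq) (hQ.pairwise_dist j) a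

end Product

end OFProduct

theorem OF_product_general (u v g : ℕ) (hu : 1 ≤ u) (hv : 1 ≤ v)
    (hgu : Even (g * u)) (hgv : Even (g * v))
    (hOFu : IsOF u g) (hOFv : IsOF v g) : IsOF (u * v) g := by
  have : NeZero u := ⟨by omega⟩
  obtain ⟨P, hP⟩ := OFProduct.hasDist3Partition_iff.mp hOFu
  obtain ⟨Q, hQ⟩ := OFProduct.hasDist3Partition_iff.mp hOFv
  have hsize : g * u / 2 * v = g * (u * v) / 2 := by
    rw [Nat.div_mul_right_comm hgu.two_dvd, mul_assoc]
  have hsizes : g * u / 2 * Fintype.card (Fin v) = g * v / 2 * Fintype.card (Fin u) := by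
    rw [Fintype.card_fin, Fintype.card_fin, hsize, Nat.div_mul_right_comm hgv.two_dvd]
    ring_nf
  have hclasses : Fintype.card (Fin (g * (u - 1)) ⊕ Fin (g * (v - 1)) × Fin u) =
      g * (u * v - 1) := by
    obtain ⟨u, rfl⟩ := Nat.exists_eq_add_of_le' hu
    obtain ⟨v, rfl⟩ := Nat.exists_eq_add_of_le' hv
    rw [Fintype.card_sum, Fintype.card_prod, Fintype.card_fin, Fintype.card_fin,
      Fintype.card_fin, show (u + 1) * (v + 1) = u + v * (u + 1) + 1 by ring,
      Nat.add_sub_cancel, Nat.add_sub_cancel, Nat.add_sub_cancel]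
    ring
  have hPQ := hP.product hQ hsizes
  rw [Fintype.card_fin, hsize] at hPQ
  exact OFProduct.hasDist3Partition_iff.mpr
    (hPQ.exists_of_equiv finProdFinEquiv (Fintype.equivFinOfCardEq hclasses))

/-- Product construction: if `g·u` and `g·v` are even, `u > g`, `v > g`, and
both an `OF(u,g)` and an `OF(v,g)` exist, then an `OF(u·v,g)` exists. -/
theorem OF_product (u v g : ℕ) (hg : 1 ≤ g) (hu : 1 ≤ u) (hv : 1 ≤ v)
    (hgu : Even (g * u)) (hgv : Even (g * v)) (hug : g < u) (hvg : g < v)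
    (hOFu : IsOF u g) (hOFv : IsOF v g) : IsOF (u * v) g :=
  OF_product_general u v g hu hv hgu hgv hOFu hOFv
end
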